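/- arXiv:2105.00988 — 10 statements merged into one kernel-verified Lean document; each statement's English description precedes it below -/
import Mathlib

section
/- Let γ < 0, λ > 0, θ > 0, δ > 0, and set c = λ/(λθ^γ + 1) (so 0 < c < θ^{−γ}). Then for every s > 0 the Lévy–Khintchine representation of the tempered positive Linnik characteristic exponent holds with the stated Mittag-Leffler Lévy density: δ·log(1 − λ((θ+s)^γ − θ^γ)) = ∫_0^∞ (1 − e^{−s x}) · (−γ) δ e^{−θ x} x^{−1} (E_{−γ}(c x^{−γ}) − 1) dx. -/
open MeasureTheory

/-- The two-parameter Mittag-Leffler function `E_{a,b}(z) = ∑_{k≥0} z^k / Γ(ak+b)`. -/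
noncomputable def mittagLeffler (a b z : ℝ) : ℝ :=
  ∑' k : ℕ, z ^ k / Real.Gamma (a * (k : ℝ) + b)

open Real Set Filter

/-- Key Gamma growth: for `a*m ≥ 1`, `Γ(a*(k+m)+1) ≥ (a*k+1) * Γ(a*k+1)`. -/
lemma gamma_step {a : ℝ} (ha : 0 < a) {m : ℕ} (hm : 1 ≤ a * m) (k : ℕ) :
    (a * k + 1) * Real.Gamma (a * k + 1) ≤ Real.Gamma (a * (k + m : ℕ) + 1) := by
  have hk : (0:ℝ) ≤ a * k := by positivity
  have h1 : (a * k + 1) * Real.Gamma (a * k + 1) = Real.Gamma (a * k + 2) := by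
    have := Real.Gamma_add_one (s := a * k + 1) (by positivity)
    rw [show a * k + 1 + 1 = a * k + 2 by ring] at this
    rw [this]
  rw [h1]
  apply Real.Gamma_strictMonoOn_Ici.monotoneOn
  · simp only [mem_Ici]; linarith
  · simp only [mem_Ici]
    push_cast
    nlinarith [mul_nonneg ha.le (Nat.cast_nonneg m)]
  · push_cast
    nlinarith

lemma ml_summable {a : ℝ} (ha : 0 < a) {z : ℝ} (hz : 0 ≤ z) :
    Summable (fun k : ℕ => z ^ k / Real.Gamma (a * k + 1)) := by
  set f : ℕ → ℝ := fun k => z ^ k / Real.Gamma (a * k + 1) with hf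
  have hfpos : ∀ k : ℕ, 0 ≤ f k := by
    intro k
    have : 0 < Real.Gamma (a * k + 1) := Real.Gamma_pos_of_pos (by positivity)
    positivity
  obtain ⟨m, hm⟩ : ∃ m : ℕ, 1 ≤ a * m := by
    obtain ⟨m, hm⟩ := exists_nat_ge (1 / a)
    exact ⟨m, by rw [div_le_iff₀ ha] at hm; linarith [hm]⟩
  have hm0 : m ≠ 0 := by rintro rfl; simp at hm; linarith
  have key : ∀ k : ℕ, f (k + m) ≤ z ^ m / (a * k + 1) * f k := by
    intro k
    have hG : 0 < Real.Gamma (a * k + 1) := Real.Gamma_pos_of_pos (by positivity)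
    have hd : 0 < (a * k + 1) * Real.Gamma (a * k + 1) := by positivity
    have h2 := gamma_step ha hm k
    calc f (k + m) = z ^ (k + m) / Real.Gamma (a * (k + m : ℕ) + 1) := rfl
      _ ≤ z ^ (k + m) / ((a * k + 1) * Real.Gamma (a * k + 1)) :=
          div_le_div_of_nonneg_left (by positivity) hd h2
      _ = z ^ m / (a * k + 1) * f k := by
          rw [hf]; rw [pow_add]; field_simp
  have hsub : ∀ j : ℕ, Summable (fun i : ℕ => f (i * m + j)) := by
    intro j
    apply summable_of_ratio_norm_eventually_le (r := 1/2) (by norm_num)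
    filter_upwards [eventually_ge_atTop (⌈2 * z ^ m⌉₊)] with i hi
    have hi' : (2 : ℝ) * z ^ m ≤ i := le_trans (Nat.le_ceil _) (by exact_mod_cast hi)
    have him : (i : ℝ) ≤ a * ((i * m + j : ℕ) : ℝ) + 1 := by
      push_cast
      nlinarith [mul_nonneg ha.le (Nat.cast_nonneg (α := ℝ) j),
        Nat.cast_nonneg (α := ℝ) i,
        mul_le_mul_of_nonneg_left hm (Nat.cast_nonneg (α := ℝ) i)]
    have hd : (0:ℝ) < a * ((i * m + j : ℕ) : ℝ) + 1 := by positivity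
    have hratio : z ^ m / (a * ((i * m + j : ℕ) : ℝ) + 1) ≤ 1 / 2 := by
      rw [div_le_div_iff₀ hd (by norm_num)]
      nlinarith
    have h1 : f ((i + 1) * m + j) ≤ z ^ m / (a * ((i * m + j : ℕ) : ℝ) + 1) * f (i * m + j) := by
      have := key (i * m + j)
      rwa [show i * m + j + m = (i + 1) * m + j by ring] at this
    rw [Real.norm_eq_abs, Real.norm_eq_abs, abs_of_nonneg (hfpos _), abs_of_nonneg (hfpos _)]
    calc f ((i + 1) * m + j) ≤ z ^ m / (a * ((i * m + j : ℕ) : ℝ) + 1) * f (i * m + j) := h1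
      _ ≤ 1 / 2 * f (i * m + j) := mul_le_mul_of_nonneg_right hratio (hfpos _)
  haveI : NeZero m := ⟨hm0⟩
  rw [← (Nat.divModEquiv m).symm.summable_iff]
  have : (f ∘ (Nat.divModEquiv m).symm) = fun p : ℕ × Fin m => f (p.1 * m + p.2) := rfl
  rw [this]
  rw [summable_prod_of_nonneg (fun p => hfpos _)]
  constructor
  · intro x; exact .of_finite
  · apply Summable.congr (f := fun i : ℕ => ∑ j : Fin m, f (i * m + j))
    · exact summable_sum (fun j _ => hsub j)
    · intro i; exact (tsum_fintype _).symm

lemma ml_tail {a : ℝ} (ha : 0 < a) {z : ℝ} (hz : 0 ≤ z) :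
    mittagLeffler a 1 z - 1 =
      ∑' k : ℕ, z ^ (k + 1) / Real.Gamma (a * ((k : ℝ) + 1) + 1) := by
  have hsum := ml_summable ha hz
  rw [mittagLeffler, Summable.tsum_eq_zero_add hsum]
  have h0 : z ^ (0:ℕ) / Real.Gamma (a * ((0:ℕ) : ℝ) + 1) = 1 := by
    simp [Real.Gamma_one]
  rw [h0]
  rw [add_sub_cancel_left]
  apply tsum_congr
  intro k
  congr 2
  push_cast
  ring

lemma intOn (b r : ℝ) (hb : 0 < b) (hr : 0 < r) :
    IntegrableOn (fun x : ℝ => x ^ (r - 1) * Real.exp (-(b * x))) (Ioi 0) := by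
  have := integrableOn_rpow_mul_exp_neg_mul_rpow (s := r - 1) (p := 1) (b := b)
    (by linarith) one_pos hb
  simpa [Real.rpow_one, neg_mul] using this

lemma key_int (b s r : ℝ) (hb : 0 < b) (hs : 0 < s) (hr : 0 < r) :
    IntegrableOn (fun x : ℝ => (1 - Real.exp (-s * x)) * (Real.exp (-b * x) * x ^ (r - 1)))
      (Ioi 0) ∧
    ∫ x in Ioi (0:ℝ), (1 - Real.exp (-s * x)) * (Real.exp (-b * x) * x ^ (r - 1)) =
      Real.Gamma r * ((1 / b) ^ r - (1 / (b + s)) ^ r) := by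
  have hfun : (fun x : ℝ => (1 - Real.exp (-s * x)) * (Real.exp (-b * x) * x ^ (r - 1))) =
      fun x : ℝ => x ^ (r - 1) * Real.exp (-(b * x)) - x ^ (r - 1) * Real.exp (-((b + s) * x)) := by
    funext x
    rw [show -((b + s) * x) = -(b * x) + -(s * x) by ring, Real.exp_add]
    ring_nf
  have h1 := intOn b r hb hr
  have h2 := intOn (b + s) r (by linarith) hr
  have hint : IntegrableOn
      (fun x : ℝ => (1 - Real.exp (-s * x)) * (Real.exp (-b * x) * x ^ (r - 1))) (Ioi 0) := by
    rw [hfun]; exact h1.sub h2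
  refine ⟨hint, ?_⟩
  rw [hfun, integral_sub h1 h2,
    Real.integral_rpow_mul_exp_neg_mul_Ioi hr hb,
    Real.integral_rpow_mul_exp_neg_mul_Ioi hr (by linarith : (0:ℝ) < b + s)]
  ring

/-- Lévy–Khintchine representation of the TPL characteristic exponent for `γ < 0`,
with the Mittag-Leffler Lévy density. -/
theorem tpl_levyKhintchine_neg (γ lam θ δ c : ℝ)
    (hγ : γ < 0) (hlam : 0 < lam) (hθ : 0 < θ) (hδ : 0 < δ)
    (hc : c = lam / (lam * θ ^ γ + 1)) :
    ∀ s : ℝ, 0 < s →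
      δ * Real.log (1 - lam * ((θ + s) ^ γ - θ ^ γ)) =
        ∫ x in Set.Ioi (0 : ℝ),
          (1 - Real.exp (-s * x)) *
            ((-γ) * δ * Real.exp (-θ * x) * x⁻¹ *
              (mittagLeffler (-γ) 1 (c * x ^ (-γ)) - 1)) := by
  intro s hs
  set a : ℝ := -γ with ha_def
  have ha : 0 < a := by rw [ha_def]; linarith
  have hθγ : 0 < θ ^ γ := Real.rpow_pos_of_pos hθ γ
  have hden : 0 < lam * θ ^ γ + 1 := by positivity
  have hc0 : 0 < c := by rw [hc]; positivity
  have hθs : 0 < θ + s := by linarith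
  have hθsγ : 0 < (θ + s) ^ γ := Real.rpow_pos_of_pos hθs γ
  set u : ℝ := c * θ ^ γ with hu_def
  set v : ℝ := c * (θ + s) ^ γ with hv_def
  have hu0 : 0 < u := by positivity
  have hv0 : 0 < v := by positivity
  have hvu : v < u := by
    rw [hu_def, hv_def]
    exact mul_lt_mul_of_pos_left
      (Real.rpow_lt_rpow_of_neg hθ (by linarith) hγ) hc0
  have hu1 : u < 1 := by
    rw [hu_def, hc, div_mul_eq_mul_div, div_lt_one hden]; linarith
  have hv1 : v < 1 := hvu.trans hu1
  have hU : HasSum (fun n : ℕ => u ^ (n + 1) / ((n : ℝ) + 1)) (-Real.log (1 - u)) := by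
    exact Real.hasSum_pow_div_log_of_abs_lt_one (x := u)
      (by rw [abs_of_pos hu0]; exact hu1)
  have hV : HasSum (fun n : ℕ => v ^ (n + 1) / ((n : ℝ) + 1)) (-Real.log (1 - v)) := by
    exact Real.hasSum_pow_div_log_of_abs_lt_one (x := v)
      (by rw [abs_of_pos hv0]; exact hv1)
  -- the term functions
  set g : ℕ → ℝ → ℝ := fun k x =>
    (1 - Real.exp (-s * x)) *
      ((a * δ * c ^ (k + 1) / Real.Gamma (a * ((k : ℝ) + 1) + 1)) *
        (Real.exp (-θ * x) * x ^ (a * ((k : ℝ) + 1) - 1))) with hg_def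
  have hrk : ∀ k : ℕ, (0:ℝ) < a * ((k : ℝ) + 1) := by intro k; positivity
  have hGpos : ∀ k : ℕ, 0 < Real.Gamma (a * ((k : ℝ) + 1) + 1) :=
    fun k => Real.Gamma_pos_of_pos (by linarith [hrk k])
  have hgfun : ∀ k : ℕ, g k = fun x : ℝ =>
      (a * δ * c ^ (k + 1) / Real.Gamma (a * ((k : ℝ) + 1) + 1)) *
        ((1 - Real.exp (-s * x)) * (Real.exp (-θ * x) * x ^ (a * ((k : ℝ) + 1) - 1))) := by
    intro k; funext x; simp only [hg_def]; ring
  -- integrability of each term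
  have hInt : ∀ k : ℕ, IntegrableOn (g k) (Ioi 0) := by
    intro k
    rw [hgfun k]
    exact ((key_int θ s _ hθ hs (hrk k)).1).const_mul _
  -- value of each term integral
  have hIval : ∀ k : ℕ, (∫ x in Ioi (0:ℝ), g k x) =
      δ * (u ^ (k + 1) / ((k : ℝ) + 1) - v ^ (k + 1) / ((k : ℝ) + 1)) := by
    intro k
    rw [hgfun k, integral_const_mul, (key_int θ s _ hθ hs (hrk k)).2]
    have hG1 : Real.Gamma (a * ((k : ℝ) + 1) + 1) =
        (a * ((k : ℝ) + 1)) * Real.Gamma (a * ((k : ℝ) + 1)) :=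
      Real.Gamma_add_one (hrk k).ne'
    have hbase : ∀ b : ℝ, 0 < b →
        (1 / b) ^ (a * ((k : ℝ) + 1)) = (b ^ γ) ^ (k + 1) := by
      intro b hb
      rw [one_div, ← Real.rpow_neg_one b, ← Real.rpow_natCast (b ^ γ) (k + 1),
        ← Real.rpow_mul hb.le, ← Real.rpow_mul hb.le]
      congr 1
      push_cast
      rw [ha_def]; ring
    rw [hbase θ hθ, hbase (θ + s) hθs, hG1, hu_def, hv_def, mul_pow, mul_pow]
    have hΓ : Real.Gamma (a * ((k : ℝ) + 1)) ≠ 0 :=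
      (Real.Gamma_pos_of_pos (hrk k)).ne'
    have hk1 : ((k : ℝ) + 1) ≠ 0 := by positivity
    field_simp
  -- nonnegativity on `Ioi 0`
  have hnn : ∀ k : ℕ, ∀ x : ℝ, x ∈ Ioi (0:ℝ) → 0 ≤ g k x := by
    intro k x hx
    simp only [mem_Ioi] at hx
    simp only [hg_def]
    apply mul_nonneg
    · have h1 : Real.exp (-s * x) ≤ 1 := by
        rw [Real.exp_le_one_iff]; nlinarith
      linarith
    · have h2 : (0:ℝ) ≤ x ^ (a * ((k : ℝ) + 1) - 1) := Real.rpow_nonneg hx.le _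
      have h3 := (hGpos k).le
      positivity
  have hnorm : ∀ k : ℕ, (∫ x in Ioi (0:ℝ), ‖g k x‖) = ∫ x in Ioi (0:ℝ), g k x := by
    intro k
    apply integral_congr_ae
    filter_upwards [ae_restrict_mem measurableSet_Ioi] with x hx
    exact Real.norm_of_nonneg (hnn k x hx)
  -- total sum
  have hTot : HasSum
      (fun k : ℕ => δ * (u ^ (k + 1) / ((k : ℝ) + 1) - v ^ (k + 1) / ((k : ℝ) + 1)))
      (δ * (-Real.log (1 - u) - -Real.log (1 - v))) := (hU.sub hV).mul_left δ
  -- interchange sum and integral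
  have hexch := MeasureTheory.integral_tsum_of_summable_integral_norm
    (μ := volume.restrict (Ioi 0)) (F := g) hInt ?_
  swap
  · apply Summable.congr hTot.summable
    intro k
    rw [hnorm k, hIval k]
  -- pointwise identification of the integrand with the series
  have hpt : ∀ x : ℝ, x ∈ Ioi (0:ℝ) →
      (1 - Real.exp (-s * x)) *
        (a * δ * Real.exp (-θ * x) * x⁻¹ * (mittagLeffler a 1 (c * x ^ a) - 1)) =
      ∑' k : ℕ, g k x := by
    intro x hx
    simp only [mem_Ioi] at hx
    have hz : (0:ℝ) ≤ c * x ^ a := by positivity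
    rw [ml_tail ha hz]
    have hx1 : ∀ k : ℕ, (c * x ^ a) ^ (k + 1) = c ^ (k + 1) * x ^ (a * ((k : ℝ) + 1)) := by
      intro k
      rw [mul_pow, ← Real.rpow_natCast (x ^ a) (k + 1), ← Real.rpow_mul hx.le]
      congr 2
      push_cast; ring
    have hx2 : ∀ k : ℕ, x ^ (a * ((k : ℝ) + 1) - 1) = x⁻¹ * x ^ (a * ((k : ℝ) + 1)) := by
      intro k
      rw [show a * ((k : ℝ) + 1) - 1 = -1 + a * ((k : ℝ) + 1) by ring,
        Real.rpow_add hx, Real.rpow_neg_one]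
    rw [show (1 - Real.exp (-s * x)) *
        (a * δ * Real.exp (-θ * x) * x⁻¹ *
          ∑' k : ℕ, (c * x ^ a) ^ (k + 1) / Real.Gamma (a * ((k : ℝ) + 1) + 1)) =
        ∑' k : ℕ, (1 - Real.exp (-s * x)) * (a * δ * Real.exp (-θ * x) * x⁻¹) *
          ((c * x ^ a) ^ (k + 1) / Real.Gamma (a * ((k : ℝ) + 1) + 1)) by
      rw [tsum_mul_left]; ring]
    apply tsum_congr
    intro k
    simp only [hg_def]
    rw [hx1 k, hx2 k]
    ring
  -- put everything together
  have h2 : (∫ x in Ioi (0:ℝ),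
      (1 - Real.exp (-s * x)) *
        (a * δ * Real.exp (-θ * x) * x⁻¹ * (mittagLeffler a 1 (c * x ^ a) - 1))) =
      ∫ x in Ioi (0:ℝ), ∑' k : ℕ, g k x :=
    setIntegral_congr_fun measurableSet_Ioi hpt
  have h3 : (∑' k : ℕ, ∫ x in Ioi (0:ℝ), g k x) =
      δ * (-Real.log (1 - u) - -Real.log (1 - v)) :=
    (tsum_congr hIval).trans hTot.tsum_eq
  have hfrac : 1 - lam * ((θ + s) ^ γ - θ ^ γ) = (1 - v) / (1 - u) := by
    rw [eq_div_iff (by linarith : (1:ℝ) - u ≠ 0), hu_def, hv_def, hc]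
    field_simp
    ring
  rw [hfrac, Real.log_div (by linarith : (1:ℝ) - v ≠ 0) (by linarith : (1:ℝ) - u ≠ 0),
    h2, ← hexch, h3]
  ring
end

section
/- Let γ < 0, λ > 0, θ > 0, δ > 0, n ≥ 1 an integer, and set c = λ/(λθ^γ + 1). Then the n-th moment of the Lévy density of the TPL(γ,λ,δ,θ) law (equivalently its n-th cumulant) satisfies ∫_0^∞ x^n · (−γ) δ e^{−θ x} x^{−1} (E_{−γ}(c x^{−γ}) − 1) dx = ((−γ) δ / θ^n) · ∑_{k=1}^∞ (c θ^γ)^k · (−kγ+1)_{n−1}, where the series converges absolutely since 0 < c θ^γ < 1. -/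
open MeasureTheory

lemma gamma_poch (m : ℕ) : ∀ y : ℝ, 0 < y →
    Real.Gamma (y + m) = Real.Gamma y * (ascPochhammer ℝ m).eval y := by
  induction m with
  | zero => intro y hy; simp
  | succ m ih =>
    intro y hy
    have h1 : y + ((m + 1 : ℕ) : ℝ) = (y + m) + 1 := by push_cast; ring
    rw [h1, Real.Gamma_add_one (by positivity), ih y hy, ascPochhammer_succ_eval]
    ring

lemma poch_le (m : ℕ) : ∀ y : ℝ, 0 < y →
    (ascPochhammer ℝ m).eval y ≤ (y + m) ^ m := by
  induction m with
  | zero => intro y hy; simp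
  | succ m ih =>
    intro y hy
    rw [ascPochhammer_succ_eval]
    have h0 : (0:ℝ) ≤ y + m := by positivity
    calc (ascPochhammer ℝ m).eval y * (y + m) ≤ (y+m)^m * (y+m) :=
          mul_le_mul_of_nonneg_right (ih y hy) h0
      _ = (y+m)^(m+1) := by ring
      _ ≤ (y + ((m+1:ℕ):ℝ))^(m+1) := by
          apply pow_le_pow_left₀ h0 ?_
          push_cast; linarith

lemma pow_le_fact (M : ℕ) : ∀ j : ℕ, M ^ j ≤ (M + j + 1).factorial := by
  intro j
  induction j with
  | zero => simpa using Nat.one_le_iff_ne_zero.mpr (Nat.factorial_ne_zero _)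
  | succ j ih =>
    have h : M + (j+1) + 1 = (M + j + 1) + 1 := by omega
    rw [h, Nat.factorial_succ, pow_succ]
    calc M ^ j * M ≤ (M + j + 1).factorial * M := Nat.mul_le_mul_right _ ih
      _ ≤ (M + j + 1).factorial * (M + j + 1 + 1) := Nat.mul_le_mul_left _ (by omega)
      _ = (M + j + 1 + 1) * (M + j + 1).factorial := Nat.mul_comm _ _

lemma pow_le_gamma (M j : ℕ) {x : ℝ} (hx : (M:ℝ) + j + 2 ≤ x) :
    (M:ℝ) ^ j ≤ Real.Gamma x := by
  have h1 : ((M + j + 1 : ℕ) : ℝ) + 1 = (M:ℝ) + j + 2 := by push_cast; ring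
  have h2 : Real.Gamma ((M:ℝ) + j + 2) ≤ Real.Gamma x := by
    apply Real.Gamma_strictMonoOn_Ici.monotoneOn ?_ ?_ hx
    · simp only [Set.mem_Ici]
      have h3 : (0:ℝ) ≤ (M:ℝ) := Nat.cast_nonneg M
      have h4 : (0:ℝ) ≤ (j:ℝ) := Nat.cast_nonneg j
      linarith
    · simp only [Set.mem_Ici]
      have h3 : (0:ℝ) ≤ (M:ℝ) := Nat.cast_nonneg M
      have h4 : (0:ℝ) ≤ (j:ℝ) := Nat.cast_nonneg j
      linarith
  calc (M:ℝ)^j ≤ ((M + j + 1).factorial : ℝ) := by exact_mod_cast pow_le_fact M j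
    _ = Real.Gamma ((M:ℝ) + j + 2) := by rw [← h1, Real.Gamma_nat_eq_factorial]
    _ ≤ Real.Gamma x := h2

lemma summable_ML {α : ℝ} (hα : 0 < α) {z : ℝ} (hz : 0 ≤ z) :
    Summable (fun k : ℕ => z ^ k / Real.Gamma (α * k + 1)) := by
  obtain ⟨M, hM⟩ := exists_nat_ge (max 2 ((2*(z+1)) ^ (2/α)))
  have hM2 : (2:ℝ) ≤ M := (le_max_left _ _).trans hM
  have hMz : 2*(z+1) ≤ (M:ℝ) ^ (α/2) := by
    have h1 : (2*(z+1))^(2/α) ≤ (M:ℝ) := (le_max_right _ _).trans hM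
    have h0 : (0:ℝ) < 2*(z+1) := by positivity
    calc 2*(z+1) = ((2*(z+1)) ^ (2/α)) ^ (α/2) := by
          rw [← Real.rpow_mul h0.le]
          rw [div_mul_div_comm]
          rw [show 2 * α / (α * 2) = 1 by rw [mul_comm]; field_simp]
          rw [Real.rpow_one]
      _ ≤ (M:ℝ)^(α/2) := Real.rpow_le_rpow (by positivity) h1 (by positivity)
  obtain ⟨k₀, hk₀⟩ := exists_nat_ge (2*((M:ℝ)+2)/α)
  have hbound : ∀ k : ℕ, (k₀:ℝ) ≤ k → z ^ k / Real.Gamma (α * k + 1) ≤ (1/2) ^ k := by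
    intro k hk
    set j : ℕ := ⌈α*k/2⌉₊ with hj_def
    have hj1 : (α*k/2 : ℝ) ≤ j := Nat.le_ceil _
    have hj2 : (j:ℝ) < α*k/2 + 1 := Nat.ceil_lt_add_one (by positivity)
    have hkk : 2*((M:ℝ)+2)/α ≤ k := hk₀.trans hk
    have hkk' : 2*((M:ℝ)+2) ≤ α * k := by
      rw [div_le_iff₀ hα] at hkk; linarith
    have hG : (M:ℝ)^j ≤ Real.Gamma (α*k+1) := by
      apply pow_le_gamma
      linarith
    have hG2 : (2*(z+1))^k ≤ Real.Gamma (α*k+1) := by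
      refine le_trans ?_ hG
      calc (2*(z+1))^k ≤ ((M:ℝ)^(α/2))^k := pow_le_pow_left₀ (by positivity) hMz k
        _ = (M:ℝ)^((α/2)*k) := by
            rw [← Real.rpow_natCast ((M:ℝ)^(α/2)) k, ← Real.rpow_mul (by positivity)]
        _ ≤ (M:ℝ)^((j:ℝ)) := by
            apply Real.rpow_le_rpow_of_exponent_le (by linarith)
            rw [mul_comm]; linarith [hj1]
        _ = (M:ℝ)^j := Real.rpow_natCast _ _
    have hGpos : (0:ℝ) < Real.Gamma (α*k+1) := Real.Gamma_pos_of_pos (by positivity)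
    calc z ^ k / Real.Gamma (α * k + 1) ≤ z^k / (2*(z+1))^k := by
          gcongr

      _ = (z / (2*(z+1)))^k := by rw [div_pow]
      _ ≤ (1/2)^k := by
          apply pow_le_pow_left₀ (by positivity)
          rw [div_le_div_iff₀ (by positivity) (by norm_num)]
          linarith
  rw [← summable_nat_add_iff k₀]
  apply Summable.of_nonneg_of_le (fun k => ?_) (fun k => ?_)
    ((summable_geometric_of_lt_one (by norm_num) (by norm_num : (1/2:ℝ) < 1)))
  · have : (0:ℝ) < Real.Gamma (α*(k+k₀)+1) := Real.Gamma_pos_of_pos (by positivity)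
    positivity
  · have hb := hbound (k+k₀) (by
      have h3 : (0:ℝ) ≤ (k:ℝ) := Nat.cast_nonneg k
      push_cast; linarith)
    push_cast at hb ⊢
    exact hb.trans (pow_le_pow_of_le_one (by norm_num) (by norm_num) (by omega))

/-- The `n`-th cumulant of the TPL law with `γ < 0`: the `n`-th moment of its Lévy
density equals `((-γ)δ/θ^n) ∑_{k≥1} (cθ^γ)^k (-kγ+1)_{n-1}`, the series (indexed here by
`k+1`, `k ≥ 0`) converging absolutely since `0 < cθ^γ < 1`. -/
theorem tpl_cumulant_neg (γ lam θ δ c : ℝ) (n : ℕ)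
    (hγ : γ < 0) (hlam : 0 < lam) (hθ : 0 < θ) (hδ : 0 < δ) (hn : 1 ≤ n)
    (hc : c = lam / (lam * θ ^ γ + 1)) :
    Summable (fun k : ℕ =>
      |(c * θ ^ γ) ^ (k + 1) *
        (ascPochhammer ℝ (n - 1)).eval (-(((k : ℝ) + 1) * γ) + 1)|) ∧
    (∫ x in Set.Ioi (0 : ℝ),
        x ^ n * ((-γ) * δ * Real.exp (-θ * x) * x⁻¹ *
          (mittagLeffler (-γ) 1 (c * x ^ (-γ)) - 1))) =
      ((-γ) * δ / θ ^ n) *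
        ∑' k : ℕ, (c * θ ^ γ) ^ (k + 1) *
          (ascPochhammer ℝ (n - 1)).eval (-(((k : ℝ) + 1) * γ) + 1) := by
  have hα0 : 0 < -γ := neg_pos.mpr hγ
  set α : ℝ := -γ with hα_def
  have hα : 0 < α := hα0
  have hn1 : (1:ℝ) ≤ (n:ℝ) := by exact_mod_cast hn
  have hθγ : 0 < θ ^ γ := Real.rpow_pos_of_pos hθ γ
  have hA : 0 < lam * θ ^ γ + 1 := by positivity
  have hc0 : 0 < c := by rw [hc]; positivity
  set r : ℝ := c * θ ^ γ with hr_def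
  have hr0 : 0 < r := by positivity
  have hr1 : r < 1 := by
    rw [hr_def, hc, div_mul_eq_mul_div, div_lt_one hA]; linarith
  have hnm : ((n - 1 : ℕ) : ℝ) = (n:ℝ) - 1 := by
    rw [Nat.cast_sub hn, Nat.cast_one]
  set P : Polynomial ℝ := ascPochhammer ℝ (n-1) with hP_def
  have harg : ∀ k : ℕ, -(((k:ℝ)+1)*γ) + 1 = α*((k:ℝ)+1)+1 := by
    intro k; rw [hα_def]; ring
  have hyk : ∀ k : ℕ, (0:ℝ) < α*((k:ℝ)+1)+1 := by
    intro k; have h0 : (0:ℝ) ≤ (k:ℝ) := Nat.cast_nonneg k; nlinarith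
  have hPpos : ∀ k : ℕ, 0 < P.eval (α*((k:ℝ)+1)+1) :=
    fun k => ascPochhammer_pos _ _ (hyk k)
  have hGy : ∀ k : ℕ, (0:ℝ) < Real.Gamma (α*((k:ℝ)+1)+1) :=
    fun k => Real.Gamma_pos_of_pos (hyk k)
  -- summability of the series
  have hsum : Summable (fun k : ℕ => r ^ (k+1) * P.eval (α*((k:ℝ)+1)+1)) := by
    have hg : Summable (fun k : ℕ => ((k:ℝ)) ^ (n-1) * r ^ k) :=
      summable_pow_mul_geometric_of_norm_lt_one (n-1)
        (by rw [Real.norm_eq_abs, abs_of_pos hr0]; exact hr1)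
    have hg1 : Summable (fun k : ℕ => (α+(n:ℝ))^(n-1) * (((k:ℝ)+1) ^ (n-1) * r ^ (k+1))) := by
      apply Summable.mul_left
      have h2 := (summable_nat_add_iff 1).mpr hg
      apply (summable_congr (fun k => ?_)).mpr h2
      push_cast
      ring
    apply Summable.of_nonneg_of_le (fun k => (mul_pos (pow_pos hr0 _) (hPpos k)).le)
      (fun k => ?_) hg1
    have h4 : P.eval (α*((k:ℝ)+1)+1) ≤ ((α*((k:ℝ)+1)+1) + ((n-1:ℕ):ℝ))^(n-1) :=
      poch_le _ _ (hyk k)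
    have h0k : (0:ℝ) ≤ (k:ℝ) := Nat.cast_nonneg k
    have h5 : (α*((k:ℝ)+1)+1) + ((n-1:ℕ):ℝ) ≤ (α + (n:ℝ)) * ((k:ℝ)+1) := by
      rw [hnm]; nlinarith
    calc r^(k+1) * P.eval (α*((k:ℝ)+1)+1)
        ≤ r^(k+1) * (((α+(n:ℝ))*((k:ℝ)+1))^(n-1)) := by
          apply mul_le_mul_of_nonneg_left
            (h4.trans (pow_le_pow_left₀ (by positivity) h5 _)) (by positivity)
      _ = (α+(n:ℝ))^(n-1) * (((k:ℝ)+1)^(n-1) * r^(k+1)) := by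
          rw [mul_pow (α+(n:ℝ)) ((k:ℝ)+1) (n-1)]; ring
  -- the integrand pieces
  set f : ℕ → ℝ → ℝ := fun k x =>
    (α * δ * c^(k+1) / Real.Gamma (α*((k:ℝ)+1)+1)) *
      (x ^ (α*((k:ℝ)+1) + (n:ℝ) - 1) * Real.exp (-(θ*x))) with hf_def
  have hfi : ∀ k, IntegrableOn (f k) (Set.Ioi 0) := by
    intro k
    simp only [hf_def]
    apply Integrable.const_mul
    have h0k : (0:ℝ) ≤ (k:ℝ) := Nat.cast_nonneg k
    have h := integrableOn_rpow_mul_exp_neg_mul_rpow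
      (s := α*((k:ℝ)+1) + (n:ℝ) - 1) (p := 1) (b := θ) (by nlinarith) one_pos hθ
    simpa [Real.rpow_one, neg_mul] using h.integrable
  -- value of each integral
  have hint : ∀ k : ℕ, (∫ x in Set.Ioi (0:ℝ), f k x)
      = (α*δ/θ^n) * (r^(k+1) * P.eval (α*((k:ℝ)+1)+1)) := by
    intro k
    have h0k : (0:ℝ) ≤ (k:ℝ) := Nat.cast_nonneg k
    have ha : (0:ℝ) < α*((k:ℝ)+1) + (n:ℝ) := by nlinarith
    simp only [hf_def]
    rw [MeasureTheory.integral_const_mul, Real.integral_rpow_mul_exp_neg_mul_Ioi ha hθ]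
    have hGam : Real.Gamma (α*((k:ℝ)+1) + (n:ℝ))
        = Real.Gamma (α*((k:ℝ)+1)+1) * P.eval (α*((k:ℝ)+1)+1) := by
      have hgp := gamma_poch (n-1) (α*((k:ℝ)+1)+1) (hyk k)
      rw [hnm] at hgp
      rw [← hgp]
      ring_nf
    have hθα : (0:ℝ) < θ ^ α := Real.rpow_pos_of_pos hθ α
    have hγα : θ ^ γ = (θ ^ α)⁻¹ := by
      rw [← Real.rpow_neg hθ.le, hα_def, neg_neg]
    have h1 : θ ^ (α*((k:ℝ)+1)) = (θ^α)^(k+1) := by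
      rw [Real.rpow_mul hθ.le, ← Real.rpow_natCast (θ^α) (k+1)]
      push_cast
      ring_nf
    have hpow : (1/θ:ℝ) ^ (α*((k:ℝ)+1) + (n:ℝ)) = (θ^γ)^(k+1) / θ^n := by
      rw [one_div, Real.inv_rpow hθ.le, Real.rpow_add hθ, Real.rpow_natCast, h1, hγα]
      rw [mul_inv, ← inv_pow]
      ring
    rw [hGam, hpow, hγα, hr_def, hγα]
    field_simp
    ring
  -- pointwise identity on Ioi 0
  have hpt : ∀ x ∈ Set.Ioi (0:ℝ),
      x ^ n * (α * δ * Real.exp (-θ * x) * x⁻¹ * (mittagLeffler α 1 (c * x ^ α) - 1))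
        = ∑' k, f k x := by
    intro x hx
    rw [Set.mem_Ioi] at hx
    have hz0 : (0:ℝ) ≤ c * x ^ α := by positivity
    have hS := summable_ML hα hz0
    have hML : mittagLeffler α 1 (c * x ^ α) - 1
        = ∑' k : ℕ, (c * x ^ α)^(k+1) / Real.Gamma (α*((k:ℝ)+1)+1) := by
      rw [mittagLeffler, Summable.tsum_eq_zero_add hS]
      have h0 : (c*x^α)^(0:ℕ) / Real.Gamma (α*((0:ℕ):ℝ)+1) = 1 := by
        norm_num [Real.Gamma_one]
      rw [h0]
      rw [show ∀ (u v : ℝ), 1 + u - 1 = v ↔ u = v from fun u v => by constructor <;> intro h <;> linarith]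
      apply tsum_congr
      intro k
      push_cast
      ring_nf
    rw [hML, ← tsum_mul_left, ← tsum_mul_left]
    apply tsum_congr
    intro k
    simp only [hf_def]
    have hx2 : (c * x^α)^(k+1) = c^(k+1) * x^(α*((k:ℝ)+1)) := by
      rw [mul_pow]
      congr 1
      rw [Real.rpow_mul hx.le, ← Real.rpow_natCast (x^α) (k+1)]
      push_cast
      ring_nf
    have hx1 : x ^ (α*((k:ℝ)+1) + (n:ℝ) - 1) = x^(α*((k:ℝ)+1)) * (x^n * x⁻¹) := by
      rw [show α*((k:ℝ)+1) + (n:ℝ) - 1 = α*((k:ℝ)+1) + ((n:ℝ) + (-1)) by ring,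
        Real.rpow_add hx, Real.rpow_add hx, Real.rpow_natCast, Real.rpow_neg_one]
    rw [hx2, hx1, neg_mul]
    have hG := (hGy k).ne'
    field_simp
  -- conclude
  constructor
  · apply (summable_congr (fun k => ?_)).mpr hsum
    rw [harg k]
    exact abs_of_pos (mul_pos (pow_pos hr0 _) (hPpos k))
  · rw [MeasureTheory.setIntegral_congr_fun measurableSet_Ioi hpt,
      ← MeasureTheory.integral_tsum_of_summable_integral_norm hfi ?_]
    · calc ∑' k, ∫ x in Set.Ioi (0:ℝ), f k x
          = ∑' k : ℕ, (α*δ/θ^n) * (r^(k+1) * P.eval (α*((k:ℝ)+1)+1)) := tsum_congr hint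
        _ = (α*δ/θ^n) * ∑' k : ℕ, r^(k+1) * P.eval (α*((k:ℝ)+1)+1) := tsum_mul_left
        _ = (α*δ/θ^n) * ∑' k : ℕ, r^(k+1) * P.eval (-(((k:ℝ)+1)*γ)+1) := by
            congr 1
            exact tsum_congr fun k => by rw [harg k]
    · apply (summable_congr (fun k => ?_)).mpr (hsum.mul_left (α*δ/θ^n))
      rw [← hint k]
      apply MeasureTheory.setIntegral_congr_fun measurableSet_Ioi
      intro x hx
      rw [Set.mem_Ioi] at hx
      simp only [hf_def]
      rw [Real.norm_eq_abs]
      apply abs_of_nonneg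
      have := (hGy k).le
      positivity
end

section
/- Let γ ∈ (0,1], λ > 0, δ > 0 and α ∈ (0,1). Then the function s ↦ ((1 + λ α^γ s^γ)/(1 + λ s^γ))^δ is completely monotone on (0,∞) and tends to 1 as s → 0+. (This is the Laplace transform of the residual component X_α in the self-decomposition X =^d αX + X_α of a positive Linnik PL(γ,λ,δ) random variable, establishing self-decomposability of the PL law.) -/
/-- A function is completely monotone on a set `S` if it is infinitely differentiable
there and `(-1)^n f^{(n)} ≥ 0` on `S` for every `n`. -/
def CompletelyMonotoneOn (f : ℝ → ℝ) (S : Set ℝ) : Prop :=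
  ContDiffOn ℝ (⊤ : ℕ∞) f S ∧
    ∀ n : ℕ, ∀ s ∈ S, 0 ≤ (-1 : ℝ) ^ n * iteratedDerivWithin n f S s

namespace PLAux

open Set Filter

local notation "S" => Set.Ioi (0:ℝ)

lemma uD : UniqueDiffOn ℝ S := isOpen_Ioi.uniqueDiffOn

/-- iterated derivative of rpow on the positive axis -/
lemma iter_rpow (p : ℝ) (n : ℕ) :
    ∀ x ∈ S, iteratedDerivWithin n (fun y : ℝ => y ^ p) S x
      = (∏ i ∈ Finset.range n, (p - i)) * x ^ (p - n) := by
  induction n with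
  | zero => intro x hx; simp
  | succ n ih =>
    intro x hx
    have hx0 : (0:ℝ) < x := hx
    rw [iteratedDerivWithin_succ, derivWithin_of_isOpen isOpen_Ioi hx]
    have hev : iteratedDerivWithin n (fun y : ℝ => y ^ p) S
        =ᶠ[nhds x] fun y => (∏ i ∈ Finset.range n, (p - i)) * y ^ (p - n) := by
      filter_upwards [isOpen_Ioi.mem_nhds hx] with y hy using ih y hy
    rw [hev.deriv_eq]
    have hd : HasDerivAt (fun y : ℝ => y ^ (p - n)) ((p - n) * x ^ (p - n - 1)) x :=
      Real.hasDerivAt_rpow_const (Or.inl hx0.ne')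
    rw [(hd.const_mul _).deriv, Finset.prod_range_succ]
    have hcast : p - ((n:ℕ)+1 : ℕ) = p - n - 1 := by push_cast; ring
    rw [hcast]; ring

lemma prod_sign {p : ℝ} (hp : p ≤ 0) (n : ℕ) :
    0 ≤ (-1:ℝ)^n * ∏ i ∈ Finset.range n, (p - i) := by
  induction n with
  | zero => simp
  | succ n ih =>
    rw [Finset.prod_range_succ]
    have h2 : (0:ℝ) ≤ (n:ℝ) - p := by
      have : (0:ℝ) ≤ (n:ℝ) := Nat.cast_nonneg n
      linarith
    have key : (-1:ℝ)^(n+1) * ((∏ i ∈ Finset.range n, (p - i)) * (p - n))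
        = ((-1:ℝ)^n * ∏ i ∈ Finset.range n, (p - i)) * ((n:ℝ) - p) := by
      rw [pow_succ]; ring
    rw [key]
    exact mul_nonneg ih h2

lemma contDiffOn_rpow (p : ℝ) : ContDiffOn ℝ (⊤ : ℕ∞) (fun y : ℝ => y ^ p) S :=
  fun x hx => (Real.contDiffAt_rpow_const_of_ne (ne_of_gt hx)).contDiffWithinAt

lemma cm_rpow {p : ℝ} (hp : p ≤ 0) : CompletelyMonotoneOn (fun y : ℝ => y ^ p) S := by
  refine ⟨contDiffOn_rpow p, fun n x hx => ?_⟩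
  rw [iter_rpow p n x hx, ← mul_assoc]
  exact mul_nonneg (prod_sign hp n) (Real.rpow_pos_of_pos hx _).le

lemma cm_congr {f g : ℝ → ℝ} (hfg : Set.EqOn f g S)
    (hf : CompletelyMonotoneOn f S) : CompletelyMonotoneOn g S := by
  refine ⟨hf.1.congr fun x hx => (hfg hx).symm, fun n x hx => ?_⟩
  rw [← iteratedDerivWithin_congr hfg hx]
  exact hf.2 n x hx

lemma cm_const {c : ℝ} (hc : 0 ≤ c) : CompletelyMonotoneOn (fun _ : ℝ => c) S := by
  refine ⟨contDiffOn_const, fun n x hx => ?_⟩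
  cases n with
  | zero => simpa using hc
  | succ n =>
    have : iteratedDerivWithin (n+1) (fun _ : ℝ => c) S x = 0 := by
      rw [iteratedDerivWithin_eq_iteratedFDerivWithin,
        iteratedFDerivWithin_const_of_ne (Nat.succ_ne_zero n) c S]
      rfl
    rw [this, mul_zero]

lemma cm_smul {c : ℝ} (hc : 0 ≤ c) {f : ℝ → ℝ} (hf : CompletelyMonotoneOn f S) :
    CompletelyMonotoneOn (fun x => c * f x) S := by
  refine ⟨hf.1.const_smul c, fun n x hx => ?_⟩
  rw [iteratedDerivWithin_const_mul hx uD c ((hf.1.of_le (by exact_mod_cast le_top)) x hx)]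
  have := hf.2 n x hx
  calc (0:ℝ) ≤ c * ((-1:ℝ)^n * iteratedDerivWithin n f S x) := mul_nonneg hc this
    _ = (-1:ℝ)^n * (c * iteratedDerivWithin n f S x) := by ring

/-- negative of the derivative of a completely monotone function is completely monotone -/
lemma cm_ndw {f : ℝ → ℝ} (hf : CompletelyMonotoneOn f S) :
    CompletelyMonotoneOn (fun x => -(derivWithin f S x)) S := by
  have hsm : ContDiffOn ℝ (⊤ : ℕ∞) (derivWithin f S) S :=
    hf.1.derivWithin uD (by simp)
  refine ⟨hsm.neg, fun n x hx => ?_⟩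
  rw [iteratedDerivWithin_fun_neg (derivWithin f S), ← iteratedDerivWithin_succ']
  have key : (-1:ℝ)^n * -(iteratedDerivWithin (n+1) f S x)
      = (-1:ℝ)^(n+1) * iteratedDerivWithin (n+1) f S x := by rw [pow_succ]; ring
  rw [key]
  exact hf.2 (n+1) x hx

lemma mul_aux : ∀ n : ℕ, ∀ f g : ℝ → ℝ, CompletelyMonotoneOn f S → CompletelyMonotoneOn g S →
    ∀ x ∈ S, 0 ≤ (-1:ℝ)^n * iteratedDerivWithin n (fun y => f y * g y) S x := by
  intro n
  induction n with
  | zero =>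
    intro f g hf hg x hx
    simpa using mul_nonneg (by simpa using hf.2 0 x hx) (by simpa using hg.2 0 x hx)
  | succ n ih =>
    intro f g hf hg x hx
    set u : ℝ → ℝ := fun y => -(derivWithin f S y) with hu
    set v : ℝ → ℝ := fun y => -(derivWithin g S y) with hv
    have hucm : CompletelyMonotoneOn u S := cm_ndw hf
    have hvcm : CompletelyMonotoneOn v S := cm_ndw hg
    have hdiff : ∀ h : ℝ → ℝ, ContDiffOn ℝ (⊤ : ℕ∞) h S → ∀ y ∈ S, DifferentiableWithinAt ℝ h S y :=
      fun h hh y hy => (hh.differentiableOn (by simp)) y hy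
    have heq : Set.EqOn (derivWithin (fun y => f y * g y) S)
        (fun y => -((u y * g y) + (f y * v y))) S := by
      intro y hy
      rw [derivWithin_fun_mul (hdiff f hf.1 y hy) (hdiff g hg.1 y hy)]
      simp only [hu, hv]; ring
    have hadd : iteratedDerivWithin n (fun y => u y * g y + f y * v y) S x
        = iteratedDerivWithin n (fun y => u y * g y) S x
          + iteratedDerivWithin n (fun y => f y * v y) S x :=
      iteratedDerivWithin_add hx uD
        (((hucm.1.mul hg.1).of_le (by exact_mod_cast le_top)) x hx) (((hf.1.mul hvcm.1).of_le (by exact_mod_cast le_top)) x hx)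
    rw [iteratedDerivWithin_succ',
      iteratedDerivWithin_congr heq hx,
      iteratedDerivWithin_fun_neg, hadd]
    have h1 := ih u g hucm hg x hx
    have h2 := ih f v hf hvcm x hx
    have key : (-1:ℝ)^(n+1) * -(iteratedDerivWithin n (fun y => u y * g y) S x
        + iteratedDerivWithin n (fun y => f y * v y) S x)
        = (-1:ℝ)^n * iteratedDerivWithin n (fun y => u y * g y) S x
          + (-1:ℝ)^n * iteratedDerivWithin n (fun y => f y * v y) S x := by
      rw [pow_succ]; ring
    rw [key]
    exact add_nonneg h1 h2

lemma cm_mul {f g : ℝ → ℝ} (hf : CompletelyMonotoneOn f S) (hg : CompletelyMonotoneOn g S) :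
    CompletelyMonotoneOn (fun y => f y * g y) S :=
  ⟨hf.1.mul hg.1, fun n x hx => mul_aux n f g hf hg x hx⟩

section comp

variable {g : ℝ → ℝ} (hmaps : Set.MapsTo g S S) (hgs : ContDiffOn ℝ (⊤ : ℕ∞) g S)
  (hg' : CompletelyMonotoneOn (fun x => derivWithin g S x) S)

include hmaps hgs hg' in
lemma comp_aux : ∀ n : ℕ, ∀ f h : ℝ → ℝ, CompletelyMonotoneOn f S → CompletelyMonotoneOn h S →
    ∀ x ∈ S, 0 ≤ (-1:ℝ)^n * iteratedDerivWithin n (fun y => f (g y) * h y) S x := by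
  intro n
  induction n with
  | zero =>
    intro f h hf hh x hx
    simpa using mul_nonneg (by simpa using hf.2 0 (g x) (hmaps hx)) (by simpa using hh.2 0 x hx)
  | succ n ih =>
    intro f h hf hh x hx
    set u : ℝ → ℝ := fun z => -(derivWithin f S z) with hu
    set v : ℝ → ℝ := fun y => -(derivWithin h S y) with hv
    have hucm : CompletelyMonotoneOn u S := cm_ndw hf
    have hvcm : CompletelyMonotoneOn v S := cm_ndw hh
    have hdiff : ∀ h : ℝ → ℝ, ContDiffOn ℝ (⊤ : ℕ∞) h S → ∀ y ∈ S, DifferentiableWithinAt ℝ h S y :=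
      fun h hh y hy => (hh.differentiableOn (by simp)) y hy
    have hfg : ContDiffOn ℝ (⊤ : ℕ∞) (fun y => f (g y)) S := hf.1.comp hgs hmaps
    have h2cm : CompletelyMonotoneOn (fun y => derivWithin g S y * h y) S := cm_mul hg' hh
    have heq : Set.EqOn (derivWithin (fun y => f (g y) * h y) S)
        (fun y => -((u (g y) * (derivWithin g S y * h y)) + (f (g y) * v y))) S := by
      intro y hy
      rw [derivWithin_fun_mul (hdiff _ hfg y hy) (hdiff h hh.1 y hy)]
      have hcomp : derivWithin (fun y => f (g y)) S y
          = derivWithin f S (g y) * derivWithin g S y := by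
        have := derivWithin_comp (h₂ := f) (h := g) y (hdiff f hf.1 (g y) (hmaps hy))
          (hdiff g hgs y hy) hmaps
        exact this
      rw [hcomp]
      simp only [hu, hv]; ring
    have hadd : iteratedDerivWithin n
          (fun y => u (g y) * (derivWithin g S y * h y) + f (g y) * v y) S x
        = iteratedDerivWithin n (fun y => u (g y) * (derivWithin g S y * h y)) S x
          + iteratedDerivWithin n (fun y => f (g y) * v y) S x :=
      iteratedDerivWithin_add hx uD
        ((((hucm.1.comp hgs hmaps).mul h2cm.1).of_le (by exact_mod_cast le_top)) x hx)
        (((hfg.mul hvcm.1).of_le (by exact_mod_cast le_top)) x hx)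
    rw [iteratedDerivWithin_succ',
      iteratedDerivWithin_congr heq hx,
      iteratedDerivWithin_fun_neg, hadd]
    have h1 := ih u (fun y => derivWithin g S y * h y) hucm h2cm x hx
    have h2 := ih f v hf hvcm x hx
    have key : (-1:ℝ)^(n+1) *
        -(iteratedDerivWithin n (fun y => u (g y) * (derivWithin g S y * h y)) S x
          + iteratedDerivWithin n (fun y => f (g y) * v y) S x)
        = (-1:ℝ)^n * iteratedDerivWithin n (fun y => u (g y) * (derivWithin g S y * h y)) S x
          + (-1:ℝ)^n * iteratedDerivWithin n (fun y => f (g y) * v y) S x := by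
      rw [pow_succ]; ring
    rw [key]
    exact add_nonneg h1 h2

include hmaps hgs hg' in
lemma cm_comp {f : ℝ → ℝ} (hf : CompletelyMonotoneOn f S) :
    CompletelyMonotoneOn (fun y => f (g y)) S := by
  refine ⟨hf.1.comp hgs hmaps, fun n x hx => ?_⟩
  have h1 := comp_aux hmaps hgs hg' n f (fun _ => 1) hf (cm_const zero_le_one) x hx
  have e : Set.EqOn (fun y => f (g y) * (fun _ : ℝ => (1:ℝ)) y) (fun y => f (g y)) S :=
    fun y _ => mul_one _
  rwa [iteratedDerivWithin_congr e hx] at h1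

end comp

end PLAux

/-- Self-decomposability of the positive Linnik law: for `γ ∈ (0,1]`, `λ, δ > 0` and
`α ∈ (0,1)`, the ratio `s ↦ ((1 + λα^γ s^γ)/(1 + λ s^γ))^δ` of Laplace transforms is
completely monotone on `(0,∞)` and tends to `1` as `s → 0+`. -/
theorem positiveLinnik_selfDecomposable (γ lam δ α : ℝ)
    (hγ0 : 0 < γ) (hγ1 : γ ≤ 1) (hlam : 0 < lam) (hδ : 0 < δ)
    (hα : α ∈ Set.Ioo (0 : ℝ) 1) :
    CompletelyMonotoneOn
      (fun s : ℝ => ((1 + lam * α ^ γ * s ^ γ) / (1 + lam * s ^ γ)) ^ δ)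
      (Set.Ioi 0) ∧
    Filter.Tendsto
      (fun s : ℝ => ((1 + lam * α ^ γ * s ^ γ) / (1 + lam * s ^ γ)) ^ δ)
      (nhdsWithin 0 (Set.Ioi 0)) (nhds 1) := by
  obtain ⟨hα0, hα1⟩ := hα
  set β : ℝ := lam * α ^ γ with hβdef
  have hβ : 0 < β := mul_pos hlam (Real.rpow_pos_of_pos hα0 γ)
  set A : ℝ := α ^ (-γ) with hAdef
  have hαγlt : α ^ γ < 1 := Real.rpow_lt_one hα0.le hα1 hγ0
  have hαγpos : 0 < α ^ γ := Real.rpow_pos_of_pos hα0 γ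
  have hAinv : A = (α ^ γ)⁻¹ := Real.rpow_neg hα0.le γ
  have hA1 : 1 < A := by
    rw [hAinv]
    have h := mul_inv_cancel₀ (ne_of_gt hαγpos)
    nlinarith [inv_pos.mpr hαγpos, hαγlt, h]
  set c : ℝ := A - 1 with hcdef
  have hc : 0 ≤ c := by simp [hcdef]; linarith
  have hAβ : A * β = lam := by
    rw [hAinv, hβdef]; field_simp
  set g₀ : ℝ → ℝ := fun s => 1 + β * s ^ γ with hg₀def
  have hg₀one : ∀ s ∈ Set.Ioi (0:ℝ), 1 ≤ g₀ s := by
    intro s hs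
    have : 0 ≤ β * s ^ γ := mul_nonneg hβ.le (Real.rpow_pos_of_pos hs γ).le
    simp [hg₀def]; linarith
  have hg₀pos : ∀ s ∈ Set.Ioi (0:ℝ), 0 < g₀ s := fun s hs => lt_of_lt_of_le one_pos (hg₀one s hs)
  have hg₀maps : Set.MapsTo g₀ (Set.Ioi 0) (Set.Ioi 0) := fun s hs => hg₀pos s hs
  have hg₀smooth : ContDiffOn ℝ (⊤ : ℕ∞) g₀ (Set.Ioi 0) :=
    contDiffOn_const.add (contDiffOn_const.mul (PLAux.contDiffOn_rpow γ))
  have hg₀hd : ∀ s ∈ Set.Ioi (0:ℝ), HasDerivAt g₀ (β * (γ * s ^ (γ - 1))) s := by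
    intro s hs
    exact ((Real.hasDerivAt_rpow_const (Or.inl (ne_of_gt hs))).const_mul β).const_add 1
  have hg₀deriv : Set.EqOn (fun s => β * γ * s ^ (γ - 1)) (derivWithin g₀ (Set.Ioi 0))
      (Set.Ioi 0) := by
    intro s hs
    rw [derivWithin_of_isOpen isOpen_Ioi hs, (hg₀hd s hs).deriv]
    ring
  have hg₀' : CompletelyMonotoneOn (fun s => derivWithin g₀ (Set.Ioi 0) s) (Set.Ioi 0) :=
    PLAux.cm_congr hg₀deriv
      (PLAux.cm_smul (mul_nonneg hβ.le hγ0.le) (PLAux.cm_rpow (by linarith)))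
  have hinv1 : CompletelyMonotoneOn (fun s => (g₀ s) ^ (-1:ℝ)) (Set.Ioi 0) :=
    PLAux.cm_comp hg₀maps hg₀smooth hg₀' (PLAux.cm_rpow (by norm_num))
  have hinv2 : CompletelyMonotoneOn (fun s => (g₀ s) ^ (-2:ℝ)) (Set.Ioi 0) :=
    PLAux.cm_comp hg₀maps hg₀smooth hg₀' (PLAux.cm_rpow (by norm_num))
  set G : ℝ → ℝ := fun s => A - c * (g₀ s) ^ (-1:ℝ) with hGdef
  have hGone : ∀ s ∈ Set.Ioi (0:ℝ), 1 ≤ G s := by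
    intro s hs
    have h1 : (g₀ s) ^ (-1:ℝ) ≤ 1 :=
      Real.rpow_le_one_of_one_le_of_nonpos (hg₀one s hs) (by norm_num)
    have h2 : 0 ≤ (g₀ s) ^ (-1:ℝ) := (Real.rpow_pos_of_pos (hg₀pos s hs) _).le
    have h3 : c * (g₀ s) ^ (-1:ℝ) ≤ c := by
      calc c * (g₀ s) ^ (-1:ℝ) ≤ c * 1 := by
            exact mul_le_mul_of_nonneg_left h1 hc
        _ = c := mul_one c
    simp only [hGdef]
    linarith
  have hGmaps : Set.MapsTo G (Set.Ioi 0) (Set.Ioi 0) := fun s hs =>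
    lt_of_lt_of_le one_pos (hGone s hs)
  have hGsmooth : ContDiffOn ℝ (⊤ : ℕ∞) G (Set.Ioi 0) :=
    contDiffOn_const.sub (contDiffOn_const.mul hinv1.1)
  have hGhd : ∀ s ∈ Set.Ioi (0:ℝ), HasDerivAt G
      (c * (β * (γ * s ^ (γ - 1))) * (g₀ s) ^ (-2:ℝ)) s := by
    intro s hs
    have h1 : HasDerivAt (fun s => (g₀ s) ^ (-1:ℝ))
        ((β * (γ * s ^ (γ - 1))) * (-1) * (g₀ s) ^ ((-1:ℝ) - 1)) s :=
      (hg₀hd s hs).rpow_const (Or.inl (ne_of_gt (hg₀pos s hs)))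
    have h2 := (h1.const_mul c).const_sub A
    refine h2.congr_deriv ?_
    have he : ((-1:ℝ) - 1) = (-2:ℝ) := by norm_num
    rw [he]; ring
  have hGderiv : Set.EqOn (fun s => (c * β * γ) * ((g₀ s) ^ (-2:ℝ) * s ^ (γ - 1)))
      (derivWithin G (Set.Ioi 0)) (Set.Ioi 0) := by
    intro s hs
    rw [derivWithin_of_isOpen isOpen_Ioi hs, (hGhd s hs).deriv]
    ring
  have hG' : CompletelyMonotoneOn (fun s => derivWithin G (Set.Ioi 0) s) (Set.Ioi 0) :=
    PLAux.cm_congr hGderiv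
      (PLAux.cm_smul (by positivity)
        (PLAux.cm_mul hinv2 (PLAux.cm_rpow (by linarith))))
  have hFcm : CompletelyMonotoneOn (fun s => (G s) ^ (-δ)) (Set.Ioi 0) :=
    PLAux.cm_comp hGmaps hGsmooth hG' (PLAux.cm_rpow (by linarith))
  -- identify with the target function
  have hden : ∀ s ∈ Set.Ioi (0:ℝ), 0 < 1 + lam * s ^ γ := by
    intro s hs
    have : 0 < lam * s ^ γ := mul_pos hlam (Real.rpow_pos_of_pos hs γ)
    linarith
  have hGval : ∀ s ∈ Set.Ioi (0:ℝ), G s = (1 + lam * s ^ γ) / g₀ s := by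
    intro s hs
    have hg0 : g₀ s ≠ 0 := ne_of_gt (hg₀pos s hs)
    have hnum : A * g₀ s - c = 1 + lam * s ^ γ := by
      simp only [hg₀def, hcdef]
      have h3 : A * (1 + β * s ^ γ) = A + A * β * s ^ γ := by ring
      rw [h3, hAβ]; ring
    have h2 : G s = (A * g₀ s - c) / g₀ s := by
      rw [sub_div, mul_div_assoc, div_self hg0, mul_one, div_eq_mul_inv]
      simp only [hGdef, Real.rpow_neg_one]
    rw [h2, hnum]
  have hEq : Set.EqOn (fun s => (G s) ^ (-δ))
      (fun s : ℝ => ((1 + lam * α ^ γ * s ^ γ) / (1 + lam * s ^ γ)) ^ δ) (Set.Ioi 0) := by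
    intro s hs
    have hGpos : 0 < G s := hGmaps hs
    have hg₀p := hg₀pos s hs
    have hdenp := hden s hs
    have hbase : (1 + lam * α ^ γ * s ^ γ) / (1 + lam * s ^ γ) = (G s)⁻¹ := by
      rw [hGval s hs, inv_div]
    simp only
    rw [hbase, Real.rpow_neg hGpos.le, ← Real.inv_rpow hGpos.le]
  constructor
  · exact PLAux.cm_congr hEq hFcm
  · -- the limit at 0+
    have hγs : Filter.Tendsto (fun s : ℝ => s ^ γ) (nhdsWithin 0 (Set.Ioi 0)) (nhds 0) := by
      have h1 : ContinuousAt (fun s : ℝ => s ^ γ) 0 := by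
        have := Real.continuousAt_rpow_const 0 γ (Or.inr hγ0.le)
        exact this
      have h2 := h1.tendsto
      rw [Real.zero_rpow (ne_of_gt hγ0)] at h2
      exact h2.mono_left nhdsWithin_le_nhds
    have hnum : Filter.Tendsto (fun s : ℝ => 1 + lam * α ^ γ * s ^ γ)
        (nhdsWithin 0 (Set.Ioi 0)) (nhds 1) := by
      have := (hγs.const_mul (lam * α ^ γ)).const_add 1
      simpa using this
    have hden2 : Filter.Tendsto (fun s : ℝ => 1 + lam * s ^ γ)
        (nhdsWithin 0 (Set.Ioi 0)) (nhds 1) := by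
      have := (hγs.const_mul lam).const_add 1
      simpa using this
    have hratio : Filter.Tendsto (fun s : ℝ => (1 + lam * α ^ γ * s ^ γ) / (1 + lam * s ^ γ))
        (nhdsWithin 0 (Set.Ioi 0)) (nhds 1) := by
      have := hnum.div hden2 one_ne_zero
      rw [div_one] at this; exact this
    have hpow : ContinuousAt (fun t : ℝ => t ^ δ) 1 :=
      Real.continuousAt_rpow_const 1 δ (Or.inl one_ne_zero)
    have := hpow.tendsto.comp hratio
    rw [Real.one_rpow] at this; exact this
end

section
/- Let a > 0, θ > 0 and c ∈ ℝ with 0 < |c| < θ^a. Then for every s ≥ 0, ∫_0^∞ e^{−(θ+s)x} x^{a−1} E_{a,a+1}(c x^a) dx = −(1/(a c)) · log(1 − c (θ+s)^{−a}). Consequently the logarithmic Mittag-Leffler LML(a,c,θ) density f(x) = −(a c / log(1 − c θ^{−a})) e^{−θ x} x^{a−1} E_{a,a+1}(c x^a), x > 0, integrates to 1 and has Laplace transform L(s) = log(1 − c (s+θ)^{−a}) / log(1 − c θ^{−a}) for s ≥ 0. -/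
open MeasureTheory

/-- The logarithmic Mittag-Leffler LML(a,c,θ) density. -/
noncomputable def lmlDensity (a c θ x : ℝ) : ℝ :=
  -(a * c / Real.log (1 - c * θ ^ (-a))) * Real.exp (-θ * x) * x ^ (a - 1) *
    mittagLeffler a (a + 1) (c * x ^ a)

open Real Set

lemma Fint (a t c : ℝ) (ha : 0 < a) (ht : 0 < t) (hc0 : c ≠ 0) (k : ℕ) :
    (∫ x in Ioi (0:ℝ),
        (c ^ k / Real.Gamma (a * k + (a + 1))) * (x ^ (a * (k + 1) - 1) * Real.exp (-(t * x))))
      = (1 / (a * c)) * ((c * t ^ (-a)) ^ (k + 1) / ((k:ℝ) + 1)) := by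
  have hpk : (0:ℝ) < a * ((k:ℝ) + 1) := by positivity
  rw [integral_const_mul,
    show (∫ x in Ioi (0:ℝ), x ^ (a * (k + 1) - 1) * Real.exp (-(t * x)))
        = (1 / t) ^ (a * ((k:ℝ) + 1)) * Real.Gamma (a * ((k:ℝ) + 1)) from
      integral_rpow_mul_exp_neg_mul_Ioi hpk ht]
  have h1 : Real.Gamma (a * k + (a + 1)) = (a * ((k:ℝ)+1)) * Real.Gamma (a * ((k:ℝ)+1)) := by
    rw [show a * (k:ℝ) + (a + 1) = a * ((k:ℝ)+1) + 1 by ring, Real.Gamma_add_one hpk.ne']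
  have h2 : (1 / t) ^ (a * ((k:ℝ) + 1)) = (t ^ (-a)) ^ (k + 1) := by
    rw [one_div, ← Real.rpow_neg_one, ← Real.rpow_natCast (t ^ (-a)) (k+1),
      ← Real.rpow_mul ht.le, ← Real.rpow_mul ht.le]
    push_cast
    ring_nf
  have hGpos : 0 < Real.Gamma (a * k + (a + 1)) := by
    apply Real.Gamma_pos_of_pos; positivity
  have hG := hGpos.ne'
  have hGk : Real.Gamma (a * ((k:ℝ)+1)) ≠ 0 := by
    intro h; rw [h1, h] at hG; simp at hG
  rw [h1, h2, mul_pow]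
  field_simp
  ring

lemma FintOn (a t : ℝ) (ha : 0 < a) (ht : 0 < t) (k : ℕ) :
    IntegrableOn (fun x : ℝ => x ^ (a * (k + 1) - 1) * Real.exp (-(t * x))) (Ioi 0) := by
  have hpk : (0:ℝ) < a * ((k:ℝ) + 1) := by positivity
  have := integrableOn_rpow_mul_exp_neg_mul_rpow
    (show (-1:ℝ) < a * (k+1) - 1 by nlinarith) zero_lt_one ht
  simpa [Real.rpow_one, neg_mul] using this

lemma key (a t c : ℝ) (ha : 0 < a) (ht : 0 < t) (hc0 : c ≠ 0) (hc : |c| < t ^ a) :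
    (∫ x in Set.Ioi (0 : ℝ),
        Real.exp (-t * x) * x ^ (a - 1) * mittagLeffler a (a + 1) (c * x ^ a)) =
      -(1 / (a * c)) * Real.log (1 - c * t ^ (-a)) := by
  set F : ℕ → ℝ → ℝ := fun k x =>
    (c ^ k / Real.Gamma (a * k + (a + 1))) * (x ^ (a * (k + 1) - 1) * Real.exp (-(t * x))) with hF
  have hta : (0:ℝ) < t ^ (-a) := Real.rpow_pos_of_pos ht _
  have hr : |c * t ^ (-a)| < 1 := by
    rw [abs_mul, abs_of_pos hta]
    calc |c| * t ^ (-a) < t ^ a * t ^ (-a) := by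
          apply mul_lt_mul_of_pos_right hc hta
      _ = 1 := by rw [← Real.rpow_add ht]; simp
  have hr' : |(|c| * t ^ (-a))| < 1 := by rwa [abs_mul, abs_abs, ← abs_mul]
  have hGpos : ∀ k : ℕ, 0 < Real.Gamma (a * k + (a + 1)) := by
    intro k; apply Real.Gamma_pos_of_pos; positivity
  have hIntF : ∀ k : ℕ, IntegrableOn (F k) (Ioi 0) := fun k => (FintOn a t ha ht k).const_mul _
  -- pointwise expansion
  have hEq : ∀ x ∈ Ioi (0:ℝ),
      Real.exp (-t * x) * x ^ (a - 1) * mittagLeffler a (a + 1) (c * x ^ a) = ∑' k, F k x := by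
    intro x hx
    have hx0 : (0:ℝ) < x := hx
    rw [mittagLeffler, ← tsum_mul_left]
    apply tsum_congr
    intro k
    have hxa : (c * x ^ a) ^ k = c ^ k * x ^ (a * k) := by
      rw [mul_pow, ← Real.rpow_natCast (x ^ a) k, ← Real.rpow_mul hx0.le]
    rw [hF, hxa]
    have hxx : x ^ (a * k) * x ^ (a - 1) = x ^ (a * (k + 1) - 1) := by
      rw [← Real.rpow_add hx0]; ring_nf
    have hex : Real.exp (-t * x) = Real.exp (-(t * x)) := by ring_nf
    field_simp
    rw [← hxx]
    ring
  rw [setIntegral_congr_fun measurableSet_Ioi hEq]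
  -- swap integral and sum
  have hmass : ∑' k : ℕ, ∫⁻ x, ‖F k x‖₊ ∂(volume.restrict (Ioi 0)) ≠ ⊤ := by
    have hnorm : ∀ k : ℕ, (∫ x in Ioi (0:ℝ), ‖F k x‖)
        = (1 / (a * |c|)) * ((|c| * t ^ (-a)) ^ (k + 1) / ((k:ℝ) + 1)) := by
      intro k
      rw [← Fint a t |c| ha ht (abs_ne_zero.2 hc0) k]
      apply setIntegral_congr_fun measurableSet_Ioi
      intro x hx
      have hx0 : (0:ℝ) < x := hx
      simp only [hF]
      rw [norm_mul, norm_div, norm_pow, Real.norm_eq_abs, Real.norm_eq_abs,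
        abs_of_pos (hGpos k), Real.norm_eq_abs,
        abs_of_nonneg (mul_nonneg (Real.rpow_nonneg hx0.le _) (Real.exp_pos _).le)]
    have hsum : Summable fun k : ℕ =>
        (1 / (a * |c|)) * ((|c| * t ^ (-a)) ^ (k + 1) / ((k:ℝ) + 1)) := by
      apply Summable.mul_left
      have := (Real.hasSum_pow_div_log_of_abs_lt_one hr').summable
      simpa using this
    calc ∑' k : ℕ, ∫⁻ x, ‖F k x‖₊ ∂(volume.restrict (Ioi 0))
        = ∑' k : ℕ, ENNReal.ofReal
            ((1 / (a * |c|)) * ((|c| * t ^ (-a)) ^ (k + 1) / ((k:ℝ) + 1))) := by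
          apply tsum_congr
          intro k
          rw [← hnorm k]; exact (ofReal_integral_norm_eq_lintegral_enorm (hIntF k)).symm
      _ = ENNReal.ofReal (∑' k : ℕ,
            (1 / (a * |c|)) * ((|c| * t ^ (-a)) ^ (k + 1) / ((k:ℝ) + 1))) := by
          rw [ENNReal.ofReal_tsum_of_nonneg _ hsum]
          intro k
          have : (0:ℝ) < |c| := abs_pos.2 hc0
          positivity
      _ ≠ ⊤ := ENNReal.ofReal_ne_top
  rw [integral_tsum (fun k => (hIntF k).aestronglyMeasurable) hmass]
  -- sum the values
  have : ∀ k : ℕ, (∫ x in Ioi (0:ℝ), F k x)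
      = (1 / (a * c)) * ((c * t ^ (-a)) ^ (k + 1) / ((k:ℝ) + 1)) :=
    fun k => Fint a t c ha ht hc0 k
  rw [tsum_congr this, tsum_mul_left]
  have hlog := (Real.hasSum_pow_div_log_of_abs_lt_one hr).tsum_eq
  rw [show (fun k : ℕ => (c * t ^ (-a)) ^ (k + 1) / ((k:ℝ) + 1))
      = fun k : ℕ => (c * t ^ (-a)) ^ (k + 1) / ((k:ℕ) + 1 : ℝ) from rfl]
  push_cast at hlog ⊢
  rw [hlog]
  ring

/-- Laplace transform of the tempered Mittag-Leffler kernel: for `a, θ > 0`, `0 < |c| < θ^a`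
and all `s ≥ 0`,
`∫_0^∞ e^{-(θ+s)x} x^{a-1} E_{a,a+1}(c x^a) dx = -(1/(ac)) log(1 - c(θ+s)^{-a})`;
consequently the LML(a,c,θ) density integrates to `1` and has Laplace transform
`log(1 - c(s+θ)^{-a}) / log(1 - cθ^{-a})`. -/
theorem lml_laplace (a θ c : ℝ) (ha : 0 < a) (hθ : 0 < θ)
    (hc0 : 0 < |c|) (hc : |c| < θ ^ a) :
    (∀ s : ℝ, 0 ≤ s →
      (∫ x in Set.Ioi (0 : ℝ),
          Real.exp (-(θ + s) * x) * x ^ (a - 1) * mittagLeffler a (a + 1) (c * x ^ a)) =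
        -(1 / (a * c)) * Real.log (1 - c * (θ + s) ^ (-a))) ∧
    (∫ x in Set.Ioi (0 : ℝ), lmlDensity a c θ x) = 1 ∧
    (∀ s : ℝ, 0 ≤ s →
      (∫ x in Set.Ioi (0 : ℝ), Real.exp (-s * x) * lmlDensity a c θ x) =
        Real.log (1 - c * (s + θ) ^ (-a)) / Real.log (1 - c * θ ^ (-a))) := by
  have hcne : c ≠ 0 := abs_pos.1 hc0
  have part1 : ∀ s : ℝ, 0 ≤ s →
      (∫ x in Set.Ioi (0 : ℝ),
          Real.exp (-(θ + s) * x) * x ^ (a - 1) * mittagLeffler a (a + 1) (c * x ^ a)) =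
        -(1 / (a * c)) * Real.log (1 - c * (θ + s) ^ (-a)) := by
    intro s hs
    have ht : 0 < θ + s := by linarith
    have hmono : θ ^ a ≤ (θ + s) ^ a :=
      Real.rpow_le_rpow hθ.le (by linarith) ha.le
    exact key a (θ + s) c ha ht hcne (lt_of_lt_of_le hc hmono)
  -- log is nonzero
  have hta : (0:ℝ) < θ ^ (-a) := Real.rpow_pos_of_pos hθ _
  have hrθ : |c * θ ^ (-a)| < 1 := by
    rw [abs_mul, abs_of_pos hta]
    calc |c| * θ ^ (-a) < θ ^ a * θ ^ (-a) := mul_lt_mul_of_pos_right hc hta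
      _ = 1 := by rw [← Real.rpow_add hθ]; simp
  have hLne : Real.log (1 - c * θ ^ (-a)) ≠ 0 := by
    have h1 : (0:ℝ) < 1 - c * θ ^ (-a) := by
      have := (abs_lt.1 hrθ).2; linarith
    have h2 : 1 - c * θ ^ (-a) ≠ 1 := by
      intro h
      have : c * θ ^ (-a) = 0 := by linarith
      exact hcne (by rcases mul_eq_zero.1 this with h | h; exact h; exact absurd h hta.ne')
    intro h
    rcases Real.log_eq_zero.1 h with h | h | h
    · exact h1.ne' h
    · exact h2 h
    · linarith
  have hane : a ≠ 0 := ha.ne'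
  refine ⟨part1, ?_, ?_⟩
  · have h0 := part1 0 le_rfl
    rw [add_zero] at h0
    have : (∫ x in Set.Ioi (0 : ℝ), lmlDensity a c θ x)
        = -(a * c / Real.log (1 - c * θ ^ (-a))) *
          ∫ x in Set.Ioi (0 : ℝ),
            Real.exp (-θ * x) * x ^ (a - 1) * mittagLeffler a (a + 1) (c * x ^ a) := by
      rw [← integral_const_mul]
      apply setIntegral_congr_fun measurableSet_Ioi
      intro x _
      simp only [lmlDensity]
      ring
    rw [this, h0]
    field_simp
  · intro s hs
    have h1 := part1 s hs
    have : (∫ x in Set.Ioi (0 : ℝ), Real.exp (-s * x) * lmlDensity a c θ x)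
        = -(a * c / Real.log (1 - c * θ ^ (-a))) *
          ∫ x in Set.Ioi (0 : ℝ),
            Real.exp (-(θ + s) * x) * x ^ (a - 1) * mittagLeffler a (a + 1) (c * x ^ a) := by
      rw [← integral_const_mul]
      apply setIntegral_congr_fun measurableSet_Ioi
      intro x _
      simp only [lmlDensity]
      rw [show -(θ + s) * x = -θ * x + -s * x by ring, Real.exp_add]
      ring
    rw [this, h1, show s + θ = θ + s by ring]
    field_simp
end

section
/- Let γ < 0, λ > 0, θ > 0, δ > 0 and set c = λ/(λθ^γ + 1), so that 0 < c < θ^{−γ}. Then for every x > 0 the Lévy density of the TPL(γ,λ,δ,θ) law factorizes as intensity times the LML density: (−γ) δ e^{−θ x} x^{−1} (E_{−γ}(c x^{−γ}) − 1) = δ·log(1 + λ θ^γ) · f(x), where f is the LML(−γ, c, θ) density. In particular the TPL(γ,λ,δ,θ) Lévy process is a compound Poisson process with jump rate δ·log(1 + λθ^γ) and i.i.d. LML(−γ, c, θ) jumps. -/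
lemma pow_sub_le_factorial (M n : ℕ) (h : M ≤ n) : M ^ (n - M) ≤ n.factorial := by
  induction n with
  | zero => simpa using Nat.one_le_iff_ne_zero.mpr (Nat.factorial_ne_zero 0)
  | succ n ih =>
    rcases Nat.lt_or_ge n M with hn | hn
    · have : M = n + 1 := le_antisymm h hn
      simp [this, Nat.one_le_iff_ne_zero.mpr (Nat.factorial_ne_zero _)]
    · have h1 : M ^ (n + 1 - M) = M * M ^ (n - M) := by
        rw [Nat.succ_sub hn, pow_succ]; ring
      calc M ^ (n + 1 - M) = M * M ^ (n - M) := h1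
        _ ≤ (n + 1) * n.factorial :=
          Nat.mul_le_mul (by omega) (ih hn)
        _ = (n + 1).factorial := (Nat.factorial_succ n).symm

set_option maxHeartbeats 1000000 in
lemma summable_ml (a z : ℝ) (ha : 0 < a) :
    Summable (fun k : ℕ => z ^ k / Real.Gamma (a * (k : ℝ) + 1)) := by
  set r := |z| with hr
  have hr0 : 0 ≤ r := abs_nonneg z
  -- choose M
  obtain ⟨M0, hM0⟩ := exists_nat_ge ((2 * (r + 1)) ^ (1 / a))
  set M : ℕ := max M0 2 with hM
  have hM2 : (2 : ℕ) ≤ M := le_max_right _ _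
  have hM2R : (2 : ℝ) ≤ (M : ℝ) := by exact_mod_cast hM2
  have hMpos : (0 : ℝ) < M := by linarith
  have hMa : 2 * (r + 1) ≤ (M : ℝ) ^ a := by
    have h1 : (2 * (r + 1)) ^ (1 / a) ≤ (M : ℝ) :=
      le_trans hM0 (by exact_mod_cast le_max_left M0 2)
    have h2 : ((2 * (r + 1)) ^ (1 / a)) ^ a ≤ (M : ℝ) ^ a :=
      Real.rpow_le_rpow (Real.rpow_nonneg (by linarith) _) h1 ha.le
    rwa [← Real.rpow_mul (by linarith), one_div, inv_mul_cancel₀ ha.ne', Real.rpow_one] at h2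
  have hMa_pos : (0 : ℝ) < (M : ℝ) ^ a := Real.rpow_pos_of_pos hMpos _
  set C : ℝ := (M : ℝ) ^ ((1 : ℝ) + M) with hC
  have hCpos : 0 < C := Real.rpow_pos_of_pos hMpos _
  -- choose K
  obtain ⟨K, hK⟩ := exists_nat_ge (((M : ℝ) + 1) / a)
  -- per-k bound
  have key : ∀ k : ℕ, (M : ℝ) + 1 ≤ a * k → r ^ k / Real.Gamma (a * k + 1) ≤ C * (1 / 2) ^ k := by
    intro k hk
    have hak0 : (0 : ℝ) ≤ a * k := by linarith [hM2R]
    set n : ℕ := ⌊a * (k : ℝ)⌋₊ with hn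
    have hMn : M + 1 ≤ n := Nat.le_floor (by exact_mod_cast hk)
    have hnak : (n : ℝ) ≤ a * k := Nat.floor_le hak0
    have hakn : a * k - 1 ≤ (n : ℝ) := by
      have := Nat.lt_floor_add_one (a * (k : ℝ)); linarith
    -- Gamma lower bound by factorial
    have hG1 : ((n.factorial : ℝ)) ≤ Real.Gamma (a * k + 1) := by
      have hmono := Real.Gamma_strictMonoOn_Ici.monotoneOn
      have h1 : ((n : ℝ) + 1) ∈ Set.Ici (2 : ℝ) := by
        simp only [Set.mem_Ici]
        have : (3 : ℝ) ≤ (n : ℝ) := by exact_mod_cast (by omega : 3 ≤ n)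
        linarith
      have h2 : (a * k + 1) ∈ Set.Ici (2 : ℝ) := by
        simp only [Set.mem_Ici]; linarith [hM2R]
      have h3 : (n : ℝ) + 1 ≤ a * k + 1 := by linarith
      have := hmono h1 h2 h3
      rwa [Real.Gamma_nat_eq_factorial] at this
    -- factorial lower bound
    have hfac : ((M : ℝ)) ^ ((n : ℝ) - M) ≤ (n.factorial : ℝ) := by
      have h1 : (M : ℕ) ^ (n - M) ≤ n.factorial := pow_sub_le_factorial M n (by omega)
      have h2 : ((M : ℝ)) ^ ((n - M : ℕ) : ℝ) = ((M ^ (n - M) : ℕ) : ℝ) := by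
        rw [Real.rpow_natCast]; push_cast; ring
      have h3 : ((n - M : ℕ) : ℝ) = (n : ℝ) - M := by
        rw [Nat.cast_sub (by omega)]
      rw [← h3, h2]
      exact_mod_cast h1
    have hexp : ((M : ℝ)) ^ (a * k - 1 - M) ≤ ((M : ℝ)) ^ ((n : ℝ) - M) :=
      Real.rpow_le_rpow_of_exponent_le (by linarith) (by linarith)
    have hsplit : ((M : ℝ)) ^ (a * k - 1 - M) = ((M : ℝ) ^ a) ^ k / C := by
      rw [hC, eq_div_iff hCpos.ne', ← Real.rpow_natCast ((M : ℝ) ^ a) k,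
        ← Real.rpow_mul hMpos.le, ← Real.rpow_add hMpos]
      ring_nf
    have hGlb : ((M : ℝ) ^ a) ^ k / C ≤ Real.Gamma (a * k + 1) := by
      rw [← hsplit]; exact le_trans hexp (le_trans hfac hG1)
    have hDpos : (0 : ℝ) < ((M : ℝ) ^ a) ^ k / C := div_pos (pow_pos hMa_pos k) hCpos
    calc r ^ k / Real.Gamma (a * k + 1) ≤ r ^ k / (((M : ℝ) ^ a) ^ k / C) :=
          div_le_div_of_nonneg_left (pow_nonneg hr0 k) hDpos hGlb
      _ = C * (r / (M : ℝ) ^ a) ^ k := by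
          rw [div_div_eq_mul_div, div_pow]; ring
      _ ≤ C * (1 / 2) ^ k := by
          apply mul_le_mul_of_nonneg_left _ hCpos.le
          apply pow_le_pow_left₀ (div_nonneg hr0 hMa_pos.le)
          rw [div_le_div_iff₀ hMa_pos (by norm_num)]
          linarith
  -- assemble
  rw [← summable_nat_add_iff K]
  apply Summable.of_norm
  have hbound : ∀ k : ℕ, ‖z ^ (k + K) / Real.Gamma (a * ((k + K : ℕ) : ℝ) + 1)‖
      ≤ C * (1 / 2) ^ (k + K) := by
    intro k
    have hkK : (M : ℝ) + 1 ≤ a * ((k + K : ℕ) : ℝ) := by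
      have h1 : ((M : ℝ) + 1) / a ≤ (K : ℝ) := hK
      have h2 : (K : ℝ) ≤ ((k + K : ℕ) : ℝ) := by push_cast; linarith [Nat.cast_nonneg (α := ℝ) k]
      have := (div_le_iff₀ ha).mp h1
      nlinarith
    have hGpos : 0 < Real.Gamma (a * ((k + K : ℕ) : ℝ) + 1) :=
      Real.Gamma_pos_of_pos (by nlinarith [hM2R])
    rw [norm_div, Real.norm_eq_abs, Real.norm_eq_abs, abs_of_pos hGpos, abs_pow]
    exact key (k + K) hkK
  apply Summable.of_nonneg_of_le (fun k => norm_nonneg _) hbound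
  have hsum : Summable (fun k : ℕ => (C * (1 / 2) ^ K) * (1 / 2 : ℝ) ^ k) :=
    (summable_geometric_of_lt_one (by norm_num) (by norm_num)).mul_left _
  exact hsum.congr fun k => by rw [pow_add]; ring

lemma ml_one_sub (a z : ℝ) (ha : 0 < a) :
    mittagLeffler a 1 z - 1 = z * mittagLeffler a (a + 1) z := by
  have hs := summable_ml a z ha
  have h0 := hs.tsum_eq_zero_add
  unfold mittagLeffler
  rw [h0]
  simp only [Nat.cast_zero, mul_zero, zero_add, pow_zero, Real.Gamma_one, div_one]
  rw [add_sub_cancel_left, ← tsum_mul_left]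
  apply tsum_congr
  intro k
  have harg : a * ((k + 1 : ℕ) : ℝ) + 1 = a * (k : ℝ) + (a + 1) := by push_cast; ring
  rw [harg, pow_succ]
  ring

/-- Compound Poisson structure of the TPL Lévy process with `γ < 0`: with
`c = λ/(λθ^γ + 1)` one has `0 < c < θ^{-γ}`, and the TPL Lévy density factorizes
pointwise as the jump rate `δ log(1 + λθ^γ)` times the LML(-γ, c, θ) density. -/
theorem tpl_neg_compoundPoisson (γ lam θ δ c : ℝ)
    (hγ : γ < 0) (hlam : 0 < lam) (hθ : 0 < θ) (hδ : 0 < δ)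
    (hc : c = lam / (lam * θ ^ γ + 1)) :
    (0 < c ∧ c < θ ^ (-γ)) ∧
    ∀ x : ℝ, 0 < x →
      (-γ) * δ * Real.exp (-θ * x) * x⁻¹ *
          (mittagLeffler (-γ) 1 (c * x ^ (-γ)) - 1) =
        δ * Real.log (1 + lam * θ ^ γ) * lmlDensity (-γ) c θ x := by
  have ha : (0 : ℝ) < -γ := by linarith
  have hθγ : (0 : ℝ) < θ ^ γ := Real.rpow_pos_of_pos hθ γ
  have hD : (0 : ℝ) < lam * θ ^ γ + 1 := by nlinarith
  have hc0 : 0 < c := by rw [hc]; exact div_pos hlam hD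
  have hθnγ : θ ^ (-γ) = (θ ^ γ)⁻¹ := Real.rpow_neg hθ.le γ
  have hclt : c < θ ^ (-γ) := by
    rw [hc, hθnγ, div_lt_iff₀ hD, inv_mul_eq_div, lt_div_iff₀ hθγ]
    nlinarith
  refine ⟨⟨hc0, hclt⟩, fun x hx => ?_⟩
  -- the log simplification
  have h1cθ : 1 - c * θ ^ (-(-γ)) = (lam * θ ^ γ + 1)⁻¹ := by
    rw [neg_neg, hc]
    field_simp
    ring
  have hL : Real.log (1 - c * θ ^ (-(-γ))) = -Real.log (1 + lam * θ ^ γ) := by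
    rw [h1cθ, Real.log_inv, add_comm 1 (lam * θ ^ γ)]
  have hLpos : 0 < Real.log (1 + lam * θ ^ γ) := by
    apply Real.log_pos; nlinarith
  -- series identity
  have hml := ml_one_sub (-γ) (c * x ^ (-γ)) ha
  -- power identity : x⁻¹ * x ^ (-γ) = x ^ (-γ - 1)
  have hpow : x ^ (-γ - 1) = x ^ (-γ) * x⁻¹ := by
    rw [Real.rpow_sub hx, Real.rpow_one, div_eq_mul_inv]
  unfold lmlDensity
  rw [hml, hL]
  set E := mittagLeffler (-γ) (-γ + 1) (c * x ^ (-γ))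
  set L := Real.log (1 + lam * θ ^ γ)
  rw [hpow]
  field_simp
end

section
/- Let γ ∈ (0,1), θ > 0, q > 0 and s > 0 with |θ^γ − q| < (θ+s)^γ. Then the function v^q(x) = e^{−θ x} x^{γ−1} E_{γ,γ}((θ^γ − q) x^γ), x > 0, satisfies ∫_0^∞ e^{−s x} v^q(x) dx = 1/( q + (θ+s)^γ − θ^γ ). Consequently v^q is the q-potential density of the tempered positive stable TPS(γ,1,θ) subordinator, whose characteristic exponent is φ(s) = (θ+s)^γ − θ^γ. -/
open MeasureTheory

lemma tps_aux_integrable {p r : ℝ} (hp : 0 < p) (hr : 0 < r) :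
    MeasureTheory.IntegrableOn (fun x : ℝ => x ^ (p - 1) * Real.exp (-(r * x)))
      (Set.Ioi (0 : ℝ)) := by
  have h0 : IntegrableOn (fun x : ℝ => Real.exp (-x) * x ^ (p - 1)) (Set.Ioi 0) :=
    Real.GammaIntegral_convergent hp
  have h1 : IntegrableOn (fun x : ℝ => Real.exp (-(r * x)) * (r * x) ^ (p - 1))
      (Set.Ioi 0) := by
    have h2 := (MeasureTheory.integrableOn_Ioi_comp_mul_left_iff
      (fun x : ℝ => Real.exp (-x) * x ^ (p - 1)) 0 hr).2
    simpa [mul_zero] using h2 (by simpa using h0)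
  have h2 := h1.const_mul (r ^ (1 - p))
  refine h2.congr ?_
  filter_upwards [ae_restrict_mem measurableSet_Ioi] with x hx
  have hx0 : (0 : ℝ) < x := hx
  rw [Real.mul_rpow hr.le hx0.le]
  rw [show r ^ (1 - p) * (Real.exp (-(r * x)) * (r ^ (p - 1) * x ^ (p - 1)))
      = (r ^ (1 - p) * r ^ (p - 1)) * (Real.exp (-(r * x)) * x ^ (p - 1)) by ring,
    ← Real.rpow_add hr]
  norm_num
  ring

/-- The `q`-potential density of the tempered positive stable `TPS(γ,1,θ)` subordinator:
`v^q(x) = e^{-θx} x^{γ-1} E_{γ,γ}((θ^γ - q)x^γ)` has Laplace transform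
`1/(q + (θ+s)^γ - θ^γ)`. -/
theorem tps_potential_density (γ θ q s : ℝ)
    (hγ : γ ∈ Set.Ioo (0 : ℝ) 1) (hθ : 0 < θ) (hq : 0 < q) (hs : 0 < s)
    (hdom : |θ ^ γ - q| < (θ + s) ^ γ) :
    ∫ x in Set.Ioi (0 : ℝ),
        Real.exp (-s * x) *
          (Real.exp (-θ * x) * x ^ (γ - 1) * mittagLeffler γ γ ((θ ^ γ - q) * x ^ γ)) =
      1 / (q + (θ + s) ^ γ - θ ^ γ) := by
  obtain ⟨hγ0, hγ1⟩ := hγ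
  set A : ℝ := θ + s with hAdef
  have hA : 0 < A := by positivity
  set B : ℝ := A ^ γ with hBdef
  have hB : 0 < B := Real.rpow_pos_of_pos hA γ
  set c : ℝ := θ ^ γ - q with hcdef
  have hcB : |c| < B := hdom
  set F : ℕ → ℝ → ℝ := fun k x =>
    (c ^ k / Real.Gamma (γ * k + γ)) * (x ^ (γ * k + γ - 1) * Real.exp (-(A * x))) with hFdef
  have hp : ∀ k : ℕ, 0 < γ * k + γ := fun k => by positivity
  have hΓ : ∀ k : ℕ, 0 < Real.Gamma (γ * k + γ) := fun k => Real.Gamma_pos_of_pos (hp k)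
  have hI : ∀ k : ℕ, ∫ x in Set.Ioi (0 : ℝ), x ^ (γ * k + γ - 1) * Real.exp (-(A * x))
      = (1 / A) ^ (γ * k + γ) * Real.Gamma (γ * k + γ) :=
    fun k => Real.integral_rpow_mul_exp_neg_mul_Ioi (hp k) hA
  have hpow : ∀ k : ℕ, (1 / A : ℝ) ^ (γ * k + γ) = (B⁻¹) ^ (k + 1) := by
    intro k
    rw [show γ * k + γ = γ * ((k + 1 : ℕ) : ℝ) by push_cast; ring,
      Real.rpow_mul (by positivity), Real.rpow_natCast, one_div,
      Real.inv_rpow hA.le]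
  have hFint : ∀ k : ℕ, IntegrableOn (F k) (Set.Ioi (0 : ℝ)) := fun k =>
    (tps_aux_integrable (hp k) hA).const_mul _
  have hnorm : ∀ k : ℕ, ∫ x in Set.Ioi (0 : ℝ), ‖F k x‖
      = B⁻¹ * (|c| * B⁻¹) ^ k := by
    intro k
    have hcong : ∀ x ∈ Set.Ioi (0 : ℝ), ‖F k x‖
        = (|c| ^ k / Real.Gamma (γ * k + γ)) * (x ^ (γ * k + γ - 1) * Real.exp (-(A * x))) := by
      intro x hx
      have hx0 : (0 : ℝ) < x := hx
      rw [hFdef]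
      simp only [Real.norm_eq_abs, abs_mul, abs_div, abs_pow,
        abs_of_pos (hΓ k), abs_of_nonneg (Real.rpow_nonneg hx0.le _),
        abs_of_pos (Real.exp_pos _)]
    rw [setIntegral_congr_fun measurableSet_Ioi hcong, MeasureTheory.integral_const_mul,
      hI k, hpow k]
    rw [div_mul_eq_mul_div, mul_div_assoc, mul_div_assoc, div_self (hΓ k).ne', mul_one,
      mul_pow, pow_succ]
    ring
  have hsum : Summable (fun k : ℕ => ∫ x in Set.Ioi (0 : ℝ), ‖F k x‖) := by
    simp_rw [hnorm]
    apply Summable.mul_left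
    apply summable_geometric_of_lt_one (by positivity)
    rw [mul_inv_lt_iff₀ hB, one_mul]
    exact hcB
  have hswap := MeasureTheory.integral_tsum_of_summable_integral_norm hFint hsum
  have hcong : ∀ x ∈ Set.Ioi (0 : ℝ),
      Real.exp (-s * x) *
        (Real.exp (-θ * x) * x ^ (γ - 1) * mittagLeffler γ γ (c * x ^ γ))
      = ∑' k : ℕ, F k x := by
    intro x hx
    have hx0 : (0 : ℝ) < x := hx
    rw [mittagLeffler, ← tsum_mul_left, ← tsum_mul_left]
    refine tsum_congr fun k => ?_
    have h1 : (c * x ^ γ) ^ k = c ^ k * x ^ (γ * k) := by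
      rw [mul_pow, ← Real.rpow_natCast (x ^ γ) k, ← Real.rpow_mul hx0.le]
    have h2 : x ^ ((γ : ℝ) * k + γ - 1) = x ^ (γ - 1) * x ^ (γ * k) := by
      rw [← Real.rpow_add hx0]; ring_nf
    have hexp : Real.exp (-(A * x)) = Real.exp (-s * x) * Real.exp (-θ * x) := by
      rw [← Real.exp_add]; congr 1; rw [hAdef]; ring
    rw [hFdef]
    simp only [h1, h2, hexp]
    ring
  rw [setIntegral_congr_fun measurableSet_Ioi hcong, ← hswap]
  have hIk : ∀ k : ℕ, ∫ x in Set.Ioi (0 : ℝ), F k x = B⁻¹ * (c * B⁻¹) ^ k := by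
    intro k
    rw [hFdef]
    simp only []
    rw [MeasureTheory.integral_const_mul, hI k, hpow k]
    rw [div_mul_eq_mul_div, mul_div_assoc, mul_div_assoc, div_self (hΓ k).ne', mul_one,
      mul_pow, pow_succ]
    ring
  simp_rw [hIk]
  rw [tsum_mul_left, tsum_geometric_of_abs_lt_one (by
    rw [abs_mul, abs_of_pos (inv_pos.mpr hB), mul_inv_lt_iff₀ hB, one_mul]; exact hcB)]
  have hBc : B - c > 0 := by
    have : c ≤ |c| := le_abs_self c
    linarith
  have hqB : q + (θ + s) ^ γ - θ ^ γ = B - c := by rw [hBdef, hcdef]; ring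
  rw [hqB]
  field_simp
end

section
/- Let a ∈ (0,1], θ > 0 and c ∈ ℝ with 0 < |c| < θ^a. Then for every s ≥ 0, ∫_0^∞ e^{−s x} e^{−θ x} ( θ·E_a(−c x^a) + c·x^{a−1}·E_{a,a}(−c x^a) ) dx = ( θ (s+θ)^{a−1} + c ) / ( (s+θ)^a + c ). In particular, for c such that the integrand is nonnegative, the tempered Mittag-Leffler TML(a,c,θ) density f_U(x) = e^{−θ x}( θ E_a(−c x^a) + c x^{a−1} E_{a,a}(−c x^a) ), x > 0, is a probability density (its integral is 1 at s = 0) and is the derivative of the c.d.f. F_U(x) = 1 − e^{−θ x} E_a(−c x^a). -/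
open MeasureTheory

/-- The tempered Mittag-Leffler TML(a,c,θ) density. -/
noncomputable def tmlDensity (a c θ x : ℝ) : ℝ :=
  Real.exp (-θ * x) *
    (θ * mittagLeffler a 1 (-c * x ^ a) + c * x ^ (a - 1) * mittagLeffler a a (-c * x ^ a))

section Aux
open Real Filter Set


/-- Gautschi-type lower bound from log-convexity of `Γ`. -/
lemma gamma_lower (a : ℝ) (ha0 : 0 < a) (ha1 : a ≤ 1) {x : ℝ} (hx : 0 < x) :
    x * Gamma x ≤ Gamma (x + a) * (x + a) ^ (1 - a) := by
  have hxa : 0 < x + a := by linarith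
  have hxa1 : 0 < x + a + 1 := by linarith
  have hconv := Real.convexOn_log_Gamma.2 (mem_Ioi.2 hxa) (mem_Ioi.2 hxa1)
    (le_of_lt ha0) (by linarith : (0:ℝ) ≤ 1 - a) (by ring)
  have hcomb : a • (x + a) + (1 - a) • (x + a + 1) = x + 1 := by
    simp [smul_eq_mul]; ring
  rw [hcomb] at hconv
  -- hconv : log (Γ (x+1)) ≤ a * log (Γ (x+a)) + (1-a) * log (Γ (x+a+1))
  simp only [Function.comp_apply, smul_eq_mul] at hconv
  have hG1 : Gamma (x + 1) = x * Gamma x := Real.Gamma_add_one hx.ne'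
  have hGa1 : Gamma (x + a + 1) = (x + a) * Gamma (x + a) := Real.Gamma_add_one hxa.ne'
  have hGa_pos : 0 < Gamma (x + a) := Real.Gamma_pos_of_pos hxa
  have hGx_pos : 0 < Gamma x := Real.Gamma_pos_of_pos hx
  have h1 : log (x * Gamma x) ≤ log (Gamma (x + a)) + (1 - a) * log (x + a) := by
    rw [← hG1]
    calc log (Gamma (x+1)) ≤ a * log (Gamma (x+a)) + (1-a) * log (Gamma (x+a+1)) := hconv
      _ = log (Gamma (x + a)) + (1 - a) * log (x + a) := by
          rw [hGa1, Real.log_mul hxa.ne' hGa_pos.ne']; ring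
  have := Real.exp_le_exp.2 h1
  rwa [Real.exp_log (by positivity), Real.exp_add, Real.exp_log hGa_pos,
    mul_comm (1 - a), ← Real.rpow_def_of_pos hxa] at this

lemma summable_ml_aux (a b : ℝ) (ha0 : 0 < a) (ha1 : a ≤ 1) (hb : 0 < b) (t : ℝ) :
    Summable (fun k : ℕ => t ^ k / Real.Gamma (a * k + b)) := by
  apply summable_of_ratio_norm_eventually_le (r := 1/2) (by norm_num)
  have hK : Tendsto (fun k : ℕ => a * (k : ℝ) + b) atTop atTop :=
    tendsto_atTop_add_const_right _ b (tendsto_natCast_atTop_atTop.const_mul_atTop ha0)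
  filter_upwards [hK.eventually_ge_atTop (max a ((4*|t|+1) ^ (a⁻¹)))] with k hk
  set x := a * (k : ℝ) + b with hxdef
  have hx : 0 < x := by positivity
  have hxa : 0 < x + a := by linarith
  have hax : a ≤ x := le_trans (le_max_left _ _) hk
  have hMx : (4*|t|+1) ^ (a⁻¹) ≤ x + a := by
    have := le_trans (le_max_right _ _) hk; linarith
  have hpowM : 4*|t|+1 ≤ (x+a) ^ a := by
    calc 4*|t|+1 = ((4*|t|+1) ^ (a⁻¹)) ^ a := (Real.rpow_inv_rpow (by positivity) ha0.ne').symm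
      _ ≤ (x+a) ^ a := Real.rpow_le_rpow (by positivity) hMx ha0.le
  have hGx : 0 < Real.Gamma x := Real.Gamma_pos_of_pos hx
  have hGxa : 0 < Real.Gamma (x + a) := Real.Gamma_pos_of_pos hxa
  have hpow_pos : 0 < (x+a) ^ (1-a) := Real.rpow_pos_of_pos hxa _
  have h2 : (x+a) ^ a * Real.Gamma x ≤ 2 * Real.Gamma (x+a) := by
    rw [← mul_le_mul_iff_of_pos_right hpow_pos]
    have hsplit : (x+a) ^ a * Real.Gamma x * (x+a) ^ (1-a) = (x+a) * Real.Gamma x := by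
      rw [mul_right_comm, mul_comm ((x+a)^a), ← Real.rpow_add hxa]
      norm_num
    rw [hsplit]
    have hg := gamma_lower a ha0 ha1 hx
    nlinarith [hGx.le, hpow_pos.le]
  have key : 2 * |t| * Real.Gamma x ≤ Real.Gamma (x+a) := by
    nlinarith [hGx.le]
  have hcast : a * ((k:ℕ)+1 : ℝ) + b = x + a := by rw [hxdef]; ring
  show ‖t ^ (k+1) / Real.Gamma (a * ((k+1 : ℕ) : ℝ) + b)‖ ≤ 1/2 * ‖t ^ k / Real.Gamma (a * k + b)‖
  push_cast
  rw [hcast]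
  rw [norm_div, norm_div, Real.norm_eq_abs (Real.Gamma _), Real.norm_eq_abs (Real.Gamma _),
    abs_of_pos hGxa, abs_of_pos hGx, norm_pow, norm_pow, mul_div_assoc' (1/2),
    div_le_div_iff₀ hGxa hGx]
  have : ‖t‖ ^ (k+1) = ‖t‖ ^ k * |t| := by rw [pow_succ, Real.norm_eq_abs]
  rw [this]
  nlinarith [key, pow_nonneg (norm_nonneg t) k]

lemma rpow_nat_split {x : ℝ} (a : ℝ) (hx : 0 ≤ x) (k : ℕ) :
    x ^ (a * (k:ℝ)) = (x ^ a) ^ k := by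
  rw [Real.rpow_mul hx, Real.rpow_natCast]

lemma integrableOn_exp_rpow {p lam : ℝ} (hp : 0 < p) (hl : 0 < lam) :
    IntegrableOn (fun x : ℝ => Real.exp (-(lam * x)) * x ^ (p - 1)) (Ioi 0) := by
  have h := Real.GammaIntegral_convergent hp
  have h2 := (integrableOn_Ioi_comp_mul_left_iff
    (fun x : ℝ => Real.exp (-x) * x ^ (p - 1)) 0 hl).2 (by simpa using h)
  refine MeasureTheory.IntegrableOn.congr_fun (h2.const_mul (lam ^ (1-p))) (fun x hx => ?_) measurableSet_Ioi
  have hx' : (0:ℝ) < x := hx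
  rw [Real.mul_rpow hl.le hx'.le]
  rw [show lam ^ (1-p) * (Real.exp (-(lam*x)) * (lam ^ (p-1) * x ^ (p-1)))
      = (lam ^ (1-p) * lam ^ (p-1)) * (Real.exp (-(lam*x)) * x ^ (p-1)) by ring,
    ← Real.rpow_add hl]
  norm_num

lemma laplace_term {p lam : ℝ} (hp : 0 < p) (hl : 0 < lam) :
    ∫ x in Ioi (0:ℝ), Real.exp (-(lam * x)) * x ^ (p - 1) = Real.Gamma p / lam ^ p := by
  have h := Real.integral_rpow_mul_exp_neg_mul_Ioi hp hl
  rw [show (∫ x in Ioi (0:ℝ), Real.exp (-(lam * x)) * x ^ (p - 1))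
      = ∫ x in Ioi (0:ℝ), x ^ (p-1) * Real.exp (-(lam * x)) by
    exact setIntegral_congr_fun measurableSet_Ioi fun x _ => mul_comm _ _, h,
    one_div, Real.inv_rpow hl.le, inv_mul_eq_div]

section
variable {a b c lam : ℝ}

lemma g_integrableOn (ha0 : 0 < a) (hb : 0 < b) (hl : 0 < lam) (k : ℕ) :
    IntegrableOn (fun x : ℝ =>
      (-c)^k / Real.Gamma (a*k+b) * (Real.exp (-(lam*x)) * x ^ (a*k+b-1))) (Ioi 0) :=
  (integrableOn_exp_rpow (by positivity) hl).const_mul _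

lemma g_integral (ha0 : 0 < a) (hb : 0 < b) (hl : 0 < lam) (k : ℕ) :
    (∫ x in Ioi (0:ℝ), (-c)^k / Real.Gamma (a*k+b) * (Real.exp (-(lam*x)) * x ^ (a*k+b-1)))
      = (-c)^k / ((lam ^ a) ^ k * lam ^ b) := by
  have hp : (0:ℝ) < a*k+b := by positivity
  have hΓ : Real.Gamma (a*k+b) ≠ 0 := (Real.Gamma_pos_of_pos hp).ne'
  have hlp : lam ^ (a*(k:ℝ)+b) = (lam^a)^k * lam^b := by
    rw [Real.rpow_add hl, rpow_nat_split a hl.le k]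
  rw [integral_const_mul, laplace_term hp hl, ← hlp]
  field_simp

lemma g_norm_integral (ha0 : 0 < a) (hb : 0 < b) (hl : 0 < lam) (k : ℕ) :
    (∫ x in Ioi (0:ℝ), ‖(-c)^k / Real.Gamma (a*k+b) * (Real.exp (-(lam*x)) * x ^ (a*k+b-1))‖)
      = |c|^k / ((lam ^ a) ^ k * lam ^ b) := by
  have hp : (0:ℝ) < a*k+b := by positivity
  have hΓ : (0:ℝ) < Real.Gamma (a*k+b) := Real.Gamma_pos_of_pos hp
  have hlp : lam ^ (a*(k:ℝ)+b) = (lam^a)^k * lam^b := by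
    rw [Real.rpow_add hl, rpow_nat_split a hl.le k]
  have h1 : (∫ x in Ioi (0:ℝ), ‖(-c)^k / Real.Gamma (a*k+b) * (Real.exp (-(lam*x)) * x ^ (a*k+b-1))‖)
      = ∫ x in Ioi (0:ℝ), |c|^k / Real.Gamma (a*k+b) * (Real.exp (-(lam*x)) * x ^ (a*k+b-1)) := by
    refine setIntegral_congr_fun measurableSet_Ioi fun x hx => ?_
    have hx' : (0:ℝ) < x := hx
    have hE : (0:ℝ) ≤ Real.exp (-(lam*x)) * x ^ (a*k+b-1) :=
      mul_nonneg (Real.exp_nonneg _) (Real.rpow_nonneg hx'.le _)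
    rw [norm_mul, norm_div, norm_pow, norm_neg, Real.norm_eq_abs c, Real.norm_eq_abs,
      Real.norm_eq_abs, abs_of_pos hΓ, abs_of_nonneg hE]
  rw [h1, integral_const_mul, laplace_term hp hl, ← hlp]
  field_simp

lemma g_tsum_integral (ha0 : 0 < a) (hb : 0 < b) (hl : 0 < lam) (hclt : |c| < lam ^ a) :
    ∑' k : ℕ, (-c)^k / ((lam ^ a) ^ k * lam ^ b) = lam ^ a / ((lam ^ a + c) * lam ^ b) := by
  have hA : (0:ℝ) < lam ^ a := Real.rpow_pos_of_pos hl a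
  have hAc : (0:ℝ) < lam ^ a + c := by
    have := neg_abs_le c; linarith
  have hB : (0:ℝ) < lam ^ b := Real.rpow_pos_of_pos hl b
  have h1 : ∀ k : ℕ, (-c)^k / ((lam ^ a) ^ k * lam ^ b) = (-c / lam^a)^k / lam ^ b := by
    intro k; rw [div_pow, div_div]
  simp_rw [h1]
  rw [tsum_div_const, tsum_geometric_of_norm_lt_one (by
    rw [norm_div, Real.norm_eq_abs, Real.norm_eq_abs, abs_neg, abs_of_pos hA]
    exact (div_lt_one hA).2 hclt)]
  rw [show (1 - -c/lam^a) = (lam^a+c)/lam^a by field_simp; ring, inv_div, div_div]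

lemma g_summable_norm_integral (ha0 : 0 < a) (hb : 0 < b) (hl : 0 < lam)
    (hclt : |c| < lam ^ a) :
    Summable (fun k : ℕ => |c|^k / ((lam ^ a) ^ k * lam ^ b)) := by
  have hA : (0:ℝ) < lam ^ a := Real.rpow_pos_of_pos hl a
  have h1 : ∀ k : ℕ, |c|^k / ((lam ^ a) ^ k * lam ^ b) = (|c| / lam^a)^k / lam ^ b := by
    intro k; rw [div_pow, div_div]
  simp_rw [h1]
  exact (summable_geometric_of_lt_one (by positivity) ((div_lt_one hA).2 hclt)).div_const _

end

section
variable {a b c lam : ℝ}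

lemma g_summable_at (ha0 : 0 < a) (hb : 0 < b) (ha1 : a ≤ 1) {x : ℝ} (hx : 0 < x) :
    Summable (fun k : ℕ =>
      (-c)^k / Real.Gamma (a*k+b) * (Real.exp (-(lam*x)) * x ^ (a*k+b-1))) := by
  apply Summable.of_norm
  have h := (summable_ml_aux a b ha0 ha1 hb (|c| * x ^ a)).mul_left
    (Real.exp (-(lam*x)) * x ^ (b-1))
  refine h.congr fun k => ?_
  have hp : (0:ℝ) < a*k+b := by positivity
  have hΓ : (0:ℝ) < Real.Gamma (a*k+b) := Real.Gamma_pos_of_pos hp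
  have hE : (0:ℝ) ≤ Real.exp (-(lam*x)) * x ^ (a*k+b-1) :=
    mul_nonneg (Real.exp_nonneg _) (Real.rpow_nonneg hx.le _)
  rw [norm_mul, norm_div, norm_pow, norm_neg, Real.norm_eq_abs c, Real.norm_eq_abs,
    Real.norm_eq_abs, abs_of_pos hΓ, abs_of_nonneg hE, mul_pow, ← rpow_nat_split a hx.le k,
    show a*(k:ℝ)+b-1 = (b-1) + a*k by ring, Real.rpow_add hx]
  ring

lemma ml_series (ha0 : 0 < a) (hb : 0 < b) {x : ℝ} (hx : 0 < x) :
    Real.exp (-(lam*x)) * x ^ (b-1) * mittagLeffler a b (-c * x^a)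
      = ∑' k : ℕ, (-c)^k / Real.Gamma (a*k+b) * (Real.exp (-(lam*x)) * x ^ (a*k+b-1)) := by
  unfold mittagLeffler
  rw [← tsum_mul_left]
  congr 1; funext k
  rw [mul_pow, ← rpow_nat_split a hx.le k,
    show a*(k:ℝ)+b-1 = (b-1) + a*k by ring, Real.rpow_add hx]
  ring

end

section
variable {a c lam : ℝ}

lemma v_summable (ha0 : 0 < a) (hl : 0 < lam) (hclt : |c| < lam ^ a) {b : ℝ} (hb : 0 < b) :
    Summable (fun k : ℕ => (-c)^k / ((lam ^ a) ^ k * lam ^ b)) := by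
  apply Summable.of_norm
  refine (g_summable_norm_integral (a := a) ha0 hb hl hclt).congr fun k => ?_
  have hA : (0:ℝ) < (lam^a)^k * lam^b := by positivity
  rw [norm_div, norm_pow, norm_neg, Real.norm_eq_abs c, Real.norm_eq_abs, abs_of_pos hA]

lemma tml_part1 (a θ c : ℝ) (ha0 : 0 < a) (ha1 : a ≤ 1) (hθ : 0 < θ) (hc : |c| < θ ^ a)
    (s : ℝ) (hs : 0 ≤ s) :
    (∫ x in Ioi (0:ℝ), Real.exp (-s * x) * tmlDensity a c θ x) =
      (θ * (s + θ) ^ (a - 1) + c) / ((s + θ) ^ a + c) := by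
  set lam := s + θ with hlam
  have hl : 0 < lam := by positivity
  have hclt : |c| < lam ^ a :=
    lt_of_lt_of_le hc (Real.rpow_le_rpow hθ.le (by linarith) ha0.le)
  have h01 : (0:ℝ) < 1 := one_pos
  -- Step 1 : rewrite the integrand as a series
  have step1 : (∫ x in Ioi (0:ℝ), Real.exp (-s * x) * tmlDensity a c θ x)
      = ∫ x in Ioi (0:ℝ), ∑' k : ℕ,
          (θ * ((-c)^k / Real.Gamma (a*k+1) * (Real.exp (-(lam*x)) * x ^ (a*k+1-1)))
            + c * ((-c)^k / Real.Gamma (a*k+a) * (Real.exp (-(lam*x)) * x ^ (a*k+a-1)))) := by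
    refine setIntegral_congr_fun measurableSet_Ioi fun x hx => ?_
    have hx' : (0:ℝ) < x := hx
    rw [Summable.tsum_add ((g_summable_at ha0 h01 ha1 hx').mul_left θ)
        ((g_summable_at ha0 ha0 ha1 hx').mul_left c),
      tsum_mul_left, tsum_mul_left, ← ml_series ha0 h01 hx', ← ml_series ha0 ha0 hx']
    unfold tmlDensity
    rw [show (1:ℝ)-1 = 0 by norm_num, Real.rpow_zero,
      show Real.exp (-(lam*x)) = Real.exp (-s*x) * Real.exp (-θ*x) from by
        rw [← Real.exp_add]; congr 1; rw [hlam]; ring]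
    ring
  -- Step 2 : swap integral and sum
  have hint1 := g_integrableOn (a := a) (b := 1) (c := c) ha0 h01 hl
  have hinta := g_integrableOn (a := a) (b := a) (c := c) ha0 ha0 hl
  have hint : ∀ k : ℕ, Integrable (fun x : ℝ =>
      θ * ((-c)^k / Real.Gamma (a*k+1) * (Real.exp (-(lam*x)) * x ^ (a*k+1-1)))
        + c * ((-c)^k / Real.Gamma (a*k+a) * (Real.exp (-(lam*x)) * x ^ (a*k+a-1))))
      (volume.restrict (Ioi 0)) :=
    fun k => ((hint1 k).const_mul θ).add ((hinta k).const_mul c)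
  have hnorm : Summable (fun k : ℕ => ∫ x in Ioi (0:ℝ),
      ‖θ * ((-c)^k / Real.Gamma (a*k+1) * (Real.exp (-(lam*x)) * x ^ (a*k+1-1)))
        + c * ((-c)^k / Real.Gamma (a*k+a) * (Real.exp (-(lam*x)) * x ^ (a*k+a-1)))‖) := by
    refine Summable.of_nonneg_of_le (fun k => integral_nonneg fun x => norm_nonneg _)
      (fun k => ?_)
      (((g_summable_norm_integral (a:=a) (c:=c) ha0 h01 hl hclt).mul_left |θ|).add
        ((g_summable_norm_integral (a:=a) (c:=c) ha0 ha0 hl hclt).mul_left |c|))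
    have hle : ∀ x : ℝ,
        ‖θ * ((-c)^k / Real.Gamma (a*k+1) * (Real.exp (-(lam*x)) * x ^ (a*k+1-1)))
          + c * ((-c)^k / Real.Gamma (a*k+a) * (Real.exp (-(lam*x)) * x ^ (a*k+a-1)))‖
        ≤ |θ| * ‖(-c)^k / Real.Gamma (a*k+1) * (Real.exp (-(lam*x)) * x ^ (a*k+1-1))‖
          + |c| * ‖(-c)^k / Real.Gamma (a*k+a) * (Real.exp (-(lam*x)) * x ^ (a*k+a-1))‖ := by
      intro x
      refine le_trans (norm_add_le _ _) ?_
      simp only [norm_mul, Real.norm_eq_abs]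
      exact le_rfl
    calc (∫ x in Ioi (0:ℝ), ‖_ + _‖)
        ≤ ∫ x in Ioi (0:ℝ),
            (|θ| * ‖(-c)^k / Real.Gamma (a*k+1) * (Real.exp (-(lam*x)) * x ^ (a*k+1-1))‖
            + |c| * ‖(-c)^k / Real.Gamma (a*k+a) * (Real.exp (-(lam*x)) * x ^ (a*k+a-1))‖) := by
          refine integral_mono (hint k).norm
            ((((hint1 k).norm.const_mul |θ|).add (((hinta k).norm.const_mul |c|))) ) hle
      _ = |θ| * (∫ x in Ioi (0:ℝ), ‖(-c)^k / Real.Gamma (a*k+1) * (Real.exp (-(lam*x)) * x ^ (a*k+1-1))‖)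
          + |c| * ∫ x in Ioi (0:ℝ), ‖(-c)^k / Real.Gamma (a*k+a) * (Real.exp (-(lam*x)) * x ^ (a*k+a-1))‖ := by
          rw [integral_add (((hint1 k).norm.const_mul |θ|)) (((hinta k).norm.const_mul |c|)),
            integral_const_mul, integral_const_mul]
      _ ≤ |θ| * (|c|^k / ((lam ^ a) ^ k * lam ^ (1:ℝ))) + |c| * (|c|^k / ((lam ^ a) ^ k * lam ^ a)) := by
          rw [g_norm_integral ha0 h01 hl k, g_norm_integral ha0 ha0 hl k]
  rw [step1, ← integral_tsum_of_summable_integral_norm hint hnorm]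
  -- Step 3 : compute the sum of the integrals
  have hv1 := v_summable (a:=a) (c:=c) ha0 hl hclt h01
  have hva := v_summable (a:=a) (c:=c) ha0 hl hclt ha0
  have hterm : ∀ k : ℕ, (∫ x in Ioi (0:ℝ),
      (θ * ((-c)^k / Real.Gamma (a*k+1) * (Real.exp (-(lam*x)) * x ^ (a*k+1-1)))
        + c * ((-c)^k / Real.Gamma (a*k+a) * (Real.exp (-(lam*x)) * x ^ (a*k+a-1)))))
      = θ * ((-c)^k / ((lam ^ a) ^ k * lam ^ (1:ℝ))) + c * ((-c)^k / ((lam ^ a) ^ k * lam ^ a)) := by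
    intro k
    rw [integral_add ((hint1 k).const_mul θ) ((hinta k).const_mul c)]
    congr 1
    · rw [integral_const_mul, g_integral ha0 h01 hl k]
    · rw [integral_const_mul, g_integral ha0 ha0 hl k]
  rw [tsum_congr hterm, Summable.tsum_add (hv1.mul_left θ) (hva.mul_left c), tsum_mul_left, tsum_mul_left,
    g_tsum_integral (a:=a) (c:=c) ha0 h01 hl hclt, g_tsum_integral (a:=a) (c:=c) ha0 ha0 hl hclt]
  -- Step 4 : algebra
  have hA : (0:ℝ) < lam ^ a := Real.rpow_pos_of_pos hl a
  have hAc : (0:ℝ) < lam ^ a + c := by have := neg_abs_le c; linarith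
  rw [Real.rpow_one, Real.rpow_sub hl, Real.rpow_one]
  field_simp

end

lemma tml_part3 (a θ c : ℝ) (ha0 : 0 < a) (ha1 : a ≤ 1)
    {x : ℝ} (hx : 0 < x) :
    HasDerivAt (fun y : ℝ => 1 - Real.exp (-θ * y) * mittagLeffler a 1 (-c * y ^ a))
      (tmlDensity a c θ x) x := by
  set r := x/2 with hr
  set R := 2*x with hR
  set M := max R 1 with hM
  have hr0 : 0 < r := by positivity
  have hM0 : (0:ℝ) < M := lt_of_lt_of_le one_pos (le_max_right _ _)
  have hxt : x ∈ Ioo r R := by constructor <;> [linarith; linarith]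
  have hsub : Ioo r R ⊆ Ioi 0 := fun y hy => lt_trans hr0 hy.1
  set sML : ℕ → ℝ → ℝ := fun k y => (-c)^k / Real.Gamma (a*k+1) * y ^ (a*(k:ℝ)) with hsML
  set sML' : ℕ → ℝ → ℝ :=
    fun k y => (-c)^k / Real.Gamma (a*k+1) * (a*(k:ℝ) * y ^ (a*(k:ℝ)-1)) with hsML'
  set u : ℕ → ℝ := fun k => (|c| * M^a)^k / (r * Real.Gamma (a*(k:ℝ))) with hu_def
  have hu : Summable u := by
    rw [← summable_nat_add_iff 1]
    have h := ((summable_ml_aux a a ha0 ha1 ha0 (|c| * M^a)).mul_left ((|c| * M^a) / r))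
    refine h.congr fun n => ?_
    simp only [hu_def]
    push_cast
    rw [show a*((n:ℝ)+1) = a*(n:ℝ)+a by ring, pow_succ]
    field_simp
  have hg : ∀ (k : ℕ) (y : ℝ), y ∈ Ioo r R → HasDerivAt (sML k) (sML' k y) y := by
    intro k y hy
    exact (Real.hasDerivAt_rpow_const (Or.inl (hsub hy).ne')).const_mul _
  have hg' : ∀ (k : ℕ) (y : ℝ), y ∈ Ioo r R → ‖sML' k y‖ ≤ u k := by
    intro k y hy
    have hy0 : 0 < y := hsub hy
    cases k with
    | zero => simp [hsML', hu_def, Real.Gamma_zero]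
    | succ j =>
      set k := j + 1
      have hak : (0:ℝ) < a*(k:ℝ) := by positivity
      have hΓ : Real.Gamma (a*(k:ℝ)+1) = a*(k:ℝ) * Real.Gamma (a*(k:ℝ)) :=
        Real.Gamma_add_one hak.ne'
      have hΓ0 : 0 < Real.Gamma (a*(k:ℝ)) := Real.Gamma_pos_of_pos hak
      have hnorm : ‖sML' k y‖ = |c|^k * (y ^ (a*(k:ℝ)-1) / Real.Gamma (a*(k:ℝ))) := by
        simp only [hsML']
        rw [norm_mul, norm_div, norm_pow, norm_neg, Real.norm_eq_abs c, Real.norm_eq_abs,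
          Real.norm_eq_abs, abs_of_pos (by rw [hΓ]; positivity : (0:ℝ) < Real.Gamma (a*(k:ℝ)+1)),
          abs_of_nonneg (by positivity : (0:ℝ) ≤ a*(k:ℝ) * y ^ (a*(k:ℝ)-1)), hΓ]
        field_simp
        exact mul_div_cancel_right₀ _ (by rintro h; rw [h, mul_zero] at hak; exact lt_irrefl _ hak)
      rw [hnorm, hu_def]
      have hyM : y ^ (a*(k:ℝ)) ≤ M ^ (a*(k:ℝ)) :=
        Real.rpow_le_rpow hy0.le (le_trans hy.2.le (le_max_left _ _)) hak.le
      have hstep : y ^ (a*(k:ℝ)-1) ≤ M ^ (a*(k:ℝ)) / r := by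
        rw [Real.rpow_sub hy0, Real.rpow_one]
        exact div_le_div₀ (by positivity) hyM hr0 hy.1.le
      calc |c|^k * (y ^ (a*(k:ℝ)-1) / Real.Gamma (a*(k:ℝ)))
          ≤ |c|^k * ((M ^ (a*(k:ℝ)) / r) / Real.Gamma (a*(k:ℝ))) := by
            gcongr
        _ = (|c| * M^a)^k / (r * Real.Gamma (a*(k:ℝ))) := by
            rw [mul_pow, rpow_nat_split a hM0.le k]
            field_simp
  have hg0 : Summable (fun k => sML k x) := by
    apply Summable.of_norm
    refine (summable_ml_aux a 1 ha0 ha1 one_pos (|c| * x^a)).congr fun k => ?_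
    have hΓ0 : 0 < Real.Gamma (a*(k:ℝ)+1) := Real.Gamma_pos_of_pos (by positivity)
    simp only [hsML]
    rw [mul_pow, rpow_nat_split a hx.le k, norm_mul, norm_div, norm_pow, norm_neg,
      Real.norm_eq_abs c, Real.norm_eq_abs, Real.norm_eq_abs, abs_of_pos hΓ0,
      abs_of_nonneg (pow_nonneg (Real.rpow_nonneg hx.le a) k)]
    ring
  have hD := hasDerivAt_tsum_of_isPreconnected hu isOpen_Ioo isPreconnected_Ioo
    hg hg' hxt hg0 hxt
  -- identify the sum of derivatives
  have hsum' : Summable (fun k => sML' k x) :=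
    Summable.of_norm (Summable.of_nonneg_of_le (fun k => norm_nonneg _)
      (fun k => hg' k x hxt) hu)
  have hDval : (∑' k, sML' k x) = -c * x^(a-1) * mittagLeffler a a (-c * x^a) := by
    rw [Summable.tsum_eq_zero_add hsum']
    have h0 : sML' 0 x = 0 := by simp [hsML']
    have hterm : ∀ j : ℕ, sML' (j+1) x
        = (-c * x^(a-1)) * ((-c * x^a)^j / Real.Gamma (a*(j:ℝ)+a)) := by
      intro j
      have hak : (0:ℝ) < a*((j:ℝ)+1) := by positivity
      have hΓ : Real.Gamma (a*((j:ℝ)+1)+1) = a*((j:ℝ)+1) * Real.Gamma (a*((j:ℝ)+1)) :=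
        Real.Gamma_add_one hak.ne'
      have hΓ0 : 0 < Real.Gamma (a*((j:ℝ)+1)) := Real.Gamma_pos_of_pos hak
      simp only [hsML']
      push_cast
      rw [hΓ, show a*((j:ℝ)+1) = a*(j:ℝ)+a by ring]
      rw [mul_pow, ← rpow_nat_split a hx.le j, pow_succ,
        show a*(j:ℝ)+a-1 = (a-1) + a*(j:ℝ) by ring, Real.rpow_add hx]
      have hne : a*(j:ℝ)+a ≠ 0 := by positivity
      have hΓ0' : Real.Gamma (a*(j:ℝ)+a) ≠ 0 := by
        rw [show a*(j:ℝ)+a = a*((j:ℝ)+1) by ring]; exact hΓ0.ne'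
      field_simp
    simp only [hterm, h0, zero_add]
    rw [tsum_mul_left]
    rfl
  have heq : (fun y : ℝ => mittagLeffler a 1 (-c * y ^ a)) =ᶠ[nhds x]
      (fun y => ∑' k, sML k y) := by
    filter_upwards [isOpen_Ioo.mem_nhds hxt] with y hy
    have hy0 : 0 < y := hsub hy
    unfold mittagLeffler
    refine tsum_congr fun k => ?_
    simp only [hsML]
    rw [mul_pow, rpow_nat_split a hy0.le k]
    ring
  have hE : HasDerivAt (fun y : ℝ => mittagLeffler a 1 (-c * y ^ a))
      (-c * x^(a-1) * mittagLeffler a a (-c * x^a)) x := by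
    rw [← hDval]
    exact hD.congr_of_eventuallyEq heq
  have hlin : HasDerivAt (fun y : ℝ => -θ * y) (-θ) x := by
    simpa using (hasDerivAt_id x).const_mul (-θ)
  have hexp := hlin.exp
  have htot := (hasDerivAt_const x (1:ℝ)).sub (hexp.mul hE)
  refine htot.congr_deriv ?_
  unfold tmlDensity
  ring

end Aux

/-- The tempered Mittag-Leffler TML(a,c,θ) law: its density has Laplace transform
`(θ(s+θ)^{a-1} + c)/((s+θ)^a + c)`, integrates to `1`, and is the derivative of the
c.d.f. `F(x) = 1 - e^{-θx} E_a(-c x^a)`. -/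
theorem tml_laplace (a θ c : ℝ) (ha0 : 0 < a) (ha1 : a ≤ 1) (hθ : 0 < θ)
    (hc0 : 0 < |c|) (hc : |c| < θ ^ a) :
    (∀ s : ℝ, 0 ≤ s →
      (∫ x in Set.Ioi (0 : ℝ), Real.exp (-s * x) * tmlDensity a c θ x) =
        (θ * (s + θ) ^ (a - 1) + c) / ((s + θ) ^ a + c)) ∧
    (∫ x in Set.Ioi (0 : ℝ), tmlDensity a c θ x) = 1 ∧
    (∀ x : ℝ, 0 < x →
      HasDerivAt (fun y : ℝ => 1 - Real.exp (-θ * y) * mittagLeffler a 1 (-c * y ^ a))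
        (tmlDensity a c θ x) x) := by
  refine ⟨fun s hs => tml_part1 a θ c ha0 ha1 hθ hc s hs, ?_,
    fun x hx => tml_part3 a θ c ha0 ha1 hx⟩
  have h := tml_part1 a θ c ha0 ha1 hθ hc 0 le_rfl
  simp only [neg_zero, zero_mul, Real.exp_zero, one_mul, zero_add] at h
  rw [h]
  have hA : (0:ℝ) < θ ^ a := Real.rpow_pos_of_pos hθ a
  have hAc : (0:ℝ) < θ ^ a + c := by have := neg_abs_le c; linarith
  rw [Real.rpow_sub hθ, Real.rpow_one]
  rw [div_eq_one_iff_eq hAc.ne']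
  field_simp
end

section
/- Let a ∈ (0,1], θ > 0 and c > 0. Then the function g(s) = (s+θ)^{a−1} · ( θ(1−a)/( c(s+θ) + θ(s+θ)^a ) + a/( c + (s+θ)^a ) ), s > 0, is completely monotone on (0,∞). Moreover g(s) = −(d/ds) log( (θ(s+θ)^{a−1} + c)/((s+θ)^a + c) ), i.e. g is the negative logarithmic derivative of the TML(a,c,θ) Laplace transform; hence the tempered Mittag-Leffler TML(a,c,θ) distribution is infinitely divisible. -/
open Set

def AltUpto : ℕ → (ℝ → ℝ) → Set ℝ → Prop
  | 0, f, U => ∀ x ∈ U, 0 ≤ f x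
  | n+1, f, U => (∀ x ∈ U, 0 ≤ f x) ∧ (∀ x ∈ U, DifferentiableAt ℝ f x) ∧
      AltUpto n (fun x => -deriv f x) U

theorem AltUpto.nonneg {n f U} (h : AltUpto n f U) : ∀ x ∈ U, 0 ≤ f x := by
  cases n with
  | zero => exact h
  | succ n => exact h.1

theorem AltUpto.congr {U : Set ℝ} (hU : IsOpen U) :
    ∀ {n : ℕ} {f g : ℝ → ℝ}, Set.EqOn f g U → AltUpto n f U → AltUpto n g U := by
  intro n
  induction n with
  | zero => intro f g hfg h x hx; rw [← hfg hx]; exact h x hx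
  | succ n ih =>
    intro f g hfg h
    have hev : ∀ x ∈ U, f =ᶠ[nhds x] g := fun x hx =>
      Filter.eventuallyEq_of_mem (hU.mem_nhds hx) hfg
    refine ⟨fun x hx => (hfg hx) ▸ h.1 x hx,
      fun x hx => (h.2.1 x hx).congr_of_eventuallyEq (hev x hx).symm,
      ih (fun x hx => ?_) h.2.2⟩
    simp only [(hev x hx).deriv_eq]

theorem AltUpto.mono {U : Set ℝ} :
    ∀ {n : ℕ} {f : ℝ → ℝ}, AltUpto (n+1) f U → AltUpto n f U := by
  intro n
  induction n with
  | zero => intro f h; exact h.1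
  | succ n ih => intro f h; exact ⟨h.1, h.2.1, ih h.2.2⟩

theorem AltUpto.const {U : Set ℝ} (c : ℝ) (hc : 0 ≤ c) :
    ∀ n : ℕ, AltUpto n (fun _ => c) U := by
  intro n
  induction n generalizing c with
  | zero => exact fun x _ => hc
  | succ n ih =>
    refine ⟨fun x _ => hc, fun x _ => differentiableAt_const c, ?_⟩
    have : (fun x : ℝ => -deriv (fun _ => c) x) = fun _ => (0:ℝ) := by
      funext x; simp
    rw [this]; exact ih 0 le_rfl

theorem AltUpto.add {U : Set ℝ} (hU : IsOpen U) :
    ∀ {n : ℕ} {f g : ℝ → ℝ}, AltUpto n f U → AltUpto n g U →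
      AltUpto n (fun x => f x + g x) U := by
  intro n
  induction n with
  | zero => intro f g hf hg x hx; exact add_nonneg (hf x hx) (hg x hx)
  | succ n ih =>
    intro f g hf hg
    refine ⟨fun x hx => add_nonneg (hf.1 x hx) (hg.1 x hx),
      fun x hx => (hf.2.1 x hx).add (hg.2.1 x hx), ?_⟩
    have := ih hf.2.2 hg.2.2
    refine AltUpto.congr hU (fun x hx => ?_) this
    simp only [deriv_fun_add (hf.2.1 x hx) (hg.2.1 x hx)]
    ring

theorem AltUpto.const_mul {U : Set ℝ} (hU : IsOpen U) {c : ℝ} (hc : 0 ≤ c) :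
    ∀ {n : ℕ} {f : ℝ → ℝ}, AltUpto n f U → AltUpto n (fun x => c * f x) U := by
  intro n
  induction n with
  | zero => intro f hf x hx; exact mul_nonneg hc (hf x hx)
  | succ n ih =>
    intro f hf
    refine ⟨fun x hx => mul_nonneg hc (hf.1 x hx),
      fun x hx => (hf.2.1 x hx).const_mul c, ?_⟩
    have := ih hf.2.2
    refine AltUpto.congr hU (fun x hx => ?_) this
    simp only [deriv_const_mul c (hf.2.1 x hx)]
    ring

theorem AltUpto.mul {U : Set ℝ} (hU : IsOpen U) :
    ∀ {n : ℕ} {f g : ℝ → ℝ}, AltUpto n f U → AltUpto n g U →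
      AltUpto n (fun x => f x * g x) U := by
  intro n
  induction n with
  | zero => intro f g hf hg x hx; exact mul_nonneg (hf x hx) (hg x hx)
  | succ n ih =>
    intro f g hf hg
    refine ⟨fun x hx => mul_nonneg (hf.1 x hx) (hg.1 x hx),
      fun x hx => (hf.2.1 x hx).mul (hg.2.1 x hx), ?_⟩
    have h1 : AltUpto n (fun x => (-deriv f x) * g x + f x * (-deriv g x)) U :=
      AltUpto.add hU (ih hf.2.2 hg.mono) (ih hf.mono hg.2.2)
    refine AltUpto.congr hU (fun x hx => ?_) h1
    simp only [deriv_fun_mul (hf.2.1 x hx) (hg.2.1 x hx)]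
    ring

theorem AltUpto.comp {U V : Set ℝ} (hU : IsOpen U) (hV : IsOpen V)
    {g : ℝ → ℝ} (hgU : ∀ x ∈ U, g x ∈ V) (hgd : ∀ x ∈ U, DifferentiableAt ℝ g x)
    (hg' : ∀ n, AltUpto n (deriv g) U) :
    ∀ {n : ℕ} {h : ℝ → ℝ}, (∀ m, AltUpto m h V) → AltUpto n (fun x => h (g x)) U := by
  intro n
  induction n with
  | zero => intro h hh x hx; exact (hh 0).nonneg (g x) (hgU x hx)
  | succ n ih =>
    intro h hh
    have hhd : ∀ y ∈ V, DifferentiableAt ℝ h y := fun y hy => (hh 1).2.1 y hy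
    refine ⟨fun x hx => (hh 0) (g x) (hgU x hx),
      fun x hx => (hhd (g x) (hgU x hx)).comp x (hgd x hx), ?_⟩
    have h1 : AltUpto n (fun x => (fun y => -deriv h y) (g x) * deriv g x) U :=
      AltUpto.mul hU (ih (fun m => (hh (m+1)).2.2)) ((hg' (n+1)).mono)
    refine AltUpto.congr hU (fun x hx => ?_) h1
    have := deriv_comp x (hhd (g x) (hgU x hx)) (hgd x hx)
    simp only [Function.comp_def] at this
    simp only [this]
    ring

theorem AltUpto.rpow {U : Set ℝ} (hU : IsOpen U) (t : ℝ) (ht : ∀ x ∈ U, 0 < x + t) :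
    ∀ (n : ℕ) (b : ℝ), b ≤ 0 → AltUpto n (fun s => (s + t) ^ b) U := by
  intro n
  induction n with
  | zero =>
    intro b _ x hx
    exact (Real.rpow_pos_of_pos (ht x hx) b).le
  | succ n ih =>
    intro b hb
    have hder : ∀ x ∈ U, HasDerivAt (fun s : ℝ => (s + t) ^ b) (b * (x + t) ^ (b - 1)) x := by
      intro x hx
      have h1 : HasDerivAt (fun s : ℝ => s + t) 1 x := (hasDerivAt_id x).add_const t
      have h2 := (Real.hasDerivAt_rpow_const (p := b) (Or.inl (ht x hx).ne')).comp x h1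
      simpa [Function.comp_def] using h2
    refine ⟨fun x hx => (Real.rpow_pos_of_pos (ht x hx) b).le,
      fun x hx => (hder x hx).differentiableAt, ?_⟩
    have h1 : AltUpto n (fun x => (-b) * (x + t) ^ (b - 1)) U :=
      AltUpto.const_mul hU (neg_nonneg.2 hb) (ih (b-1) (by linarith))
    refine AltUpto.congr hU (fun x hx => ?_) h1
    rw [(hder x hx).deriv]
    ring

theorem iterate_deriv_neg : ∀ (n : ℕ) (f : ℝ → ℝ),
    deriv^[n] (fun x => -f x) = fun x => -deriv^[n] f x := by
  intro n
  induction n with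
  | zero => intro f; rfl
  | succ m ihm =>
    intro f
    rw [Function.iterate_succ_apply, Function.iterate_succ_apply]
    have : deriv (fun x => -f x) = fun x => -deriv f x := by
      funext y; rw [deriv.fun_neg]
    rw [this, ihm]

theorem AltUpto.iterate_deriv_sign {U : Set ℝ} :
    ∀ {n : ℕ} {f : ℝ → ℝ}, AltUpto n f U → ∀ x ∈ U, 0 ≤ (-1 : ℝ) ^ n * deriv^[n] f x := by
  intro n
  induction n with
  | zero => intro f h x hx; simpa using h x hx
  | succ n ih =>
    intro f h x hx
    have := ih h.2.2 x hx
    rw [iterate_deriv_neg] at this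
    rw [Function.iterate_succ_apply]
    calc (0:ℝ) ≤ (-1)^n * -deriv^[n] (deriv f) x := this
    _ = (-1)^(n+1) * deriv^[n] (deriv f) x := by ring

theorem iteratedDerivWithin_isOpen_eq {U : Set ℝ} (hU : IsOpen U) (f : ℝ → ℝ) (n : ℕ)
    {x : ℝ} (hx : x ∈ U) : iteratedDerivWithin n f U x = deriv^[n] f x := by
  rw [iteratedDerivWithin_eq_iteratedFDerivWithin, iteratedFDerivWithin_of_isOpen n hU hx,
    ← iteratedDeriv_eq_iteratedFDeriv, iteratedDeriv_eq_iterate]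

theorem AltUpto.inv_Ioi : ∀ m : ℕ, AltUpto m (fun y : ℝ => y⁻¹) (Set.Ioi 0) := by
  intro m
  have h := AltUpto.rpow isOpen_Ioi 0 (fun x hx => by simpa using hx) m (-1) (by norm_num)
  refine AltUpto.congr isOpen_Ioi (fun x hx => ?_) h
  simp only [add_zero]
  rw [Real.rpow_neg_one]

theorem tml_CM (a θ c : ℝ) (ha0 : 0 < a) (ha1 : a ≤ 1) (hθ : 0 < θ) (hc : 0 < c) :
    ∀ n : ℕ, AltUpto n
      (fun s : ℝ => (s + θ) ^ (a - 1) *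
        (θ * (1 - a) / (c * (s + θ) + θ * (s + θ) ^ a) + a / (c + (s + θ) ^ a)))
      (Set.Ioi 0) := by
  intro n
  have hU : IsOpen (Set.Ioi (0:ℝ)) := isOpen_Ioi
  have hxt : ∀ x ∈ Set.Ioi (0:ℝ), 0 < x + θ := fun x hx => add_pos hx hθ
  have hpowd : ∀ (b : ℝ), ∀ x ∈ Set.Ioi (0:ℝ),
      HasDerivAt (fun s : ℝ => (s + θ) ^ b) (b * (x + θ) ^ (b - 1)) x := by
    intro b x hx
    have h1 : HasDerivAt (fun s : ℝ => s + θ) 1 x := (hasDerivAt_id x).add_const θ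
    simpa [Function.comp_def] using (Real.hasDerivAt_rpow_const (p := b) (Or.inl (hxt x hx).ne')).comp x h1
  -- G2 = c(s+θ) + θ(s+θ)^a
  have hG2d : ∀ x ∈ Set.Ioi (0:ℝ),
      HasDerivAt (fun s : ℝ => c * (s + θ) + θ * (s + θ) ^ a)
        (c + θ * (a * (x + θ) ^ (a - 1))) x := by
    intro x hx
    have h1 : HasDerivAt (fun s : ℝ => s + θ) 1 x := (hasDerivAt_id x).add_const θ
    simpa [Pi.add_def] using ((h1.const_mul c).add ((hpowd a x hx).const_mul θ))
  have hG2' : ∀ m, AltUpto m (deriv (fun s : ℝ => c * (s + θ) + θ * (s + θ) ^ a))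
      (Set.Ioi 0) := by
    intro m
    have hbase : AltUpto m (fun x => c + θ * a * (x + θ) ^ (a - 1)) (Set.Ioi 0) :=
      AltUpto.add hU (AltUpto.const c hc.le m)
        (AltUpto.const_mul hU (by positivity)
          (AltUpto.rpow hU θ hxt m (a - 1) (by linarith)))
    refine AltUpto.congr hU (fun x hx => ?_) hbase
    rw [(hG2d x hx).deriv]; ring
  have hG2I : ∀ m, AltUpto m
      (fun x => (c * (x + θ) + θ * (x + θ) ^ a)⁻¹) (Set.Ioi 0) := by
    intro m
    exact AltUpto.comp hU isOpen_Ioi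
      (fun x hx => by
        have := hxt x hx
        have : (0:ℝ) < c * (x + θ) + θ * (x + θ) ^ a := by positivity
        simpa using this)
      (fun x hx => (hG2d x hx).differentiableAt) hG2' AltUpto.inv_Ioi
  -- G3 = c + (s+θ)^a
  have hG3d : ∀ x ∈ Set.Ioi (0:ℝ),
      HasDerivAt (fun s : ℝ => c + (s + θ) ^ a) (a * (x + θ) ^ (a - 1)) x := by
    intro x hx
    simpa [Pi.add_def] using ((hasDerivAt_const x c).add (hpowd a x hx))
  have hG3' : ∀ m, AltUpto m (deriv (fun s : ℝ => c + (s + θ) ^ a)) (Set.Ioi 0) := by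
    intro m
    have hbase : AltUpto m (fun x => a * (x + θ) ^ (a - 1)) (Set.Ioi 0) :=
      AltUpto.const_mul hU ha0.le (AltUpto.rpow hU θ hxt m (a - 1) (by linarith))
    refine AltUpto.congr hU (fun x hx => ?_) hbase
    rw [(hG3d x hx).deriv]
  have hG3I : ∀ m, AltUpto m (fun x => (c + (x + θ) ^ a)⁻¹) (Set.Ioi 0) := by
    intro m
    exact AltUpto.comp hU isOpen_Ioi
      (fun x hx => by
        have := hxt x hx
        have : (0:ℝ) < c + (x + θ) ^ a := by positivity
        simpa using this)
      (fun x hx => (hG3d x hx).differentiableAt) hG3' AltUpto.inv_Ioi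
  have hbuilt : AltUpto n
      (fun s => (s + θ) ^ (a - 1) *
        (θ * (1 - a) * (c * (s + θ) + θ * (s + θ) ^ a)⁻¹ +
          a * (c + (s + θ) ^ a)⁻¹)) (Set.Ioi 0) :=
    AltUpto.mul hU (AltUpto.rpow hU θ hxt n (a - 1) (by linarith))
      (AltUpto.add hU
        (AltUpto.const_mul hU (mul_nonneg hθ.le (by linarith)) (hG2I n))
        (AltUpto.const_mul hU ha0.le (hG3I n)))
  refine AltUpto.congr hU (fun x hx => ?_) hbuilt
  simp only [div_eq_mul_inv]

theorem tml_smooth (a θ c : ℝ) (ha0 : 0 < a) (ha1 : a ≤ 1) (hθ : 0 < θ) (hc : 0 < c) :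
    ContDiffOn ℝ (⊤ : ℕ∞)
      (fun s : ℝ => (s + θ) ^ (a - 1) *
        (θ * (1 - a) / (c * (s + θ) + θ * (s + θ) ^ a) + a / (c + (s + θ) ^ a)))
      (Set.Ioi 0) := by
  intro x hx
  have hx0 : (0:ℝ) < x := hx
  have hxθ : 0 < x + θ := by linarith
  apply ContDiffAt.contDiffWithinAt
  have hid : ContDiffAt ℝ (⊤ : ℕ∞) (fun s : ℝ => s + θ) x := by fun_prop
  have hp1 : ContDiffAt ℝ (⊤ : ℕ∞) (fun s : ℝ => (s + θ) ^ (a - 1)) x :=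
    hid.rpow_const_of_ne hxθ.ne'
  have hpa : ContDiffAt ℝ (⊤ : ℕ∞) (fun s : ℝ => (s + θ) ^ a) x :=
    hid.rpow_const_of_ne hxθ.ne'
  have hD1 : ContDiffAt ℝ (⊤ : ℕ∞) (fun s : ℝ => c * (s + θ) + θ * (s + θ) ^ a) x := by
    exact (hid.const_smul c).add (hpa.const_smul θ)
  have hD2 : ContDiffAt ℝ (⊤ : ℕ∞) (fun s : ℝ => c + (s + θ) ^ a) x :=
    contDiffAt_const.add hpa
  have hD1ne : c * (x + θ) + θ * (x + θ) ^ a ≠ 0 := by positivity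
  have hD2ne : c + (x + θ) ^ a ≠ 0 := by positivity
  exact hp1.mul ((contDiffAt_const.div hD1 hD1ne).add (contDiffAt_const.div hD2 hD2ne))

/-- Infinite divisibility of the tempered Mittag-Leffler TML(a,c,θ) law: the function
`g(s) = (s+θ)^{a-1}(θ(1-a)/(c(s+θ) + θ(s+θ)^a) + a/(c + (s+θ)^a))` is completely
monotone on `(0,∞)` and equals the negative logarithmic derivative of the TML Laplace
transform `(θ(s+θ)^{a-1} + c)/((s+θ)^a + c)`. -/
theorem tml_infinitelyDivisible (a θ c : ℝ) (ha0 : 0 < a) (ha1 : a ≤ 1)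
    (hθ : 0 < θ) (hc : 0 < c) :
    CompletelyMonotoneOn
      (fun s : ℝ => (s + θ) ^ (a - 1) *
        (θ * (1 - a) / (c * (s + θ) + θ * (s + θ) ^ a) + a / (c + (s + θ) ^ a)))
      (Set.Ioi 0) ∧
    ∀ s : ℝ, 0 < s →
      (s + θ) ^ (a - 1) *
          (θ * (1 - a) / (c * (s + θ) + θ * (s + θ) ^ a) + a / (c + (s + θ) ^ a)) =
        -deriv (fun u : ℝ =>
          Real.log ((θ * (u + θ) ^ (a - 1) + c) / ((u + θ) ^ a + c))) s := by
  constructor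
  · refine ⟨tml_smooth a θ c ha0 ha1 hθ hc, ?_⟩
    intro n s hs
    rw [iteratedDerivWithin_isOpen_eq isOpen_Ioi _ n hs]
    exact (tml_CM a θ c ha0 ha1 hθ hc n).iterate_deriv_sign s hs
  · intro s hs
    have hx : (0:ℝ) < s + θ := add_pos hs hθ
    have h1 : HasDerivAt (fun u : ℝ => u + θ) 1 s := (hasDerivAt_id s).add_const θ
    have hpb : ∀ b : ℝ, HasDerivAt (fun u : ℝ => (u + θ) ^ b) (b * (s + θ) ^ (b - 1)) s :=
      fun b => by
        simpa [Function.comp_def] using (Real.hasDerivAt_rpow_const (p := b) (Or.inl hx.ne')).comp s h1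
    have hN : HasDerivAt (fun u : ℝ => θ * (u + θ) ^ (a - 1) + c)
        (θ * ((a - 1) * (s + θ) ^ (a - 1 - 1))) s := ((hpb (a-1)).const_mul θ).add_const c
    have hD : HasDerivAt (fun u : ℝ => (u + θ) ^ a + c)
        (a * (s + θ) ^ (a - 1)) s := (hpb a).add_const c
    have hB : (0:ℝ) < (s + θ) ^ (a - 1) := Real.rpow_pos_of_pos hx _
    have hBa : (0:ℝ) < (s + θ) ^ a := Real.rpow_pos_of_pos hx _
    have hNpos : (0:ℝ) < θ * (s + θ) ^ (a - 1) + c := by positivity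
    have hDpos : (0:ℝ) < (s + θ) ^ a + c := by positivity
    have hQ := hN.div hD hDpos.ne'
    have hlog := hQ.log (div_ne_zero hNpos.ne' hDpos.ne')
    rw [show (fun u : ℝ => Real.log ((θ * (u + θ) ^ (a - 1) + c) / ((u + θ) ^ a + c))) = (fun y => Real.log (((fun u => θ * (u + θ) ^ (a - 1) + c) / fun u => (u + θ) ^ a + c) y)) from rfl, hlog.deriv, Pi.div_apply]
    have e1 : (s + θ) ^ (a - 1) * (s + θ) = (s + θ) ^ a := by
      rw [← Real.rpow_add_one hx.ne']; norm_num
    have e2 : (s + θ) ^ (a - 1 - 1) = (s + θ) ^ (a - 1) / (s + θ) := by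
      rw [eq_div_iff hx.ne', ← Real.rpow_add_one hx.ne']; norm_num
    rw [e2, ← e1]
    have d1 : c * (s + θ) + θ * ((s + θ) ^ (a - 1) * (s + θ)) ≠ 0 := by positivity
    have d2 : c + (s + θ) ^ (a - 1) * (s + θ) ≠ 0 := by positivity
    have d3 : θ * (s + θ) ^ (a - 1) + c ≠ 0 := hNpos.ne'
    have d4 : (s + θ) ^ (a - 1) * (s + θ) + c ≠ 0 := by positivity
    field_simp
    ring
end

section
/- Let γ ∈ (0,1], λ > 0, θ > 0 with λθ^γ < 1, δ > 0, α > 0, and set c = (λθ^γ − 1)/λ. Define φ(s) = δ·log(1 + λ((θ+s)^γ − θ^γ)). Then for every s > 0: α·s·φ'(s) = α δ γ · λ s (θ+s)^{γ−1} / ( 1 + λ((θ+s)^γ − θ^γ) ) = α δ γ · ( 1 − ( θ(θ+s)^{γ−1} − c ) / ( (θ+s)^γ − c ) ). Consequently the Lévy noise Z^α driving the Ornstein–Uhlenbeck equation with TPL(γ,λ,δ,θ) stationary law has characteristic exponent α s φ'(s), which is the exponent of a compound Poisson process with rate α δ γ and TML(γ, −c, θ) jumps. -/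
/-- The characteristic exponent of the Lévy noise driving the OU equation with
TPL(γ,λ,δ,θ) stationary law: with `φ(s) = δ log(1 + λ((θ+s)^γ - θ^γ))` and
`c = (λθ^γ - 1)/λ`, for every `s > 0`,
`α s φ'(s) = αδγ λs(θ+s)^{γ-1}/(1 + λ((θ+s)^γ - θ^γ))
           = αδγ (1 - (θ(θ+s)^{γ-1} - c)/((θ+s)^γ - c))`,
the exponent of a compound Poisson process with rate `αδγ` and TML(γ,-c,θ) jumps. -/
theorem tpl_ou_noise (γ lam θ δ α c : ℝ)
    (hγ0 : 0 < γ) (hγ1 : γ ≤ 1) (hlam : 0 < lam) (hθ : 0 < θ)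
    (htemp : lam * θ ^ γ < 1) (hδ : 0 < δ) (hα : 0 < α)
    (hc : c = (lam * θ ^ γ - 1) / lam) :
    ∀ s : ℝ, 0 < s →
      α * s * deriv (fun u : ℝ => δ * Real.log (1 + lam * ((θ + u) ^ γ - θ ^ γ))) s =
          α * δ * γ *
            (lam * s * (θ + s) ^ (γ - 1) / (1 + lam * ((θ + s) ^ γ - θ ^ γ))) ∧
      α * s * deriv (fun u : ℝ => δ * Real.log (1 + lam * ((θ + u) ^ γ - θ ^ γ))) s =
          α * δ * γ * (1 - (θ * (θ + s) ^ (γ - 1) - c) / ((θ + s) ^ γ - c)) := by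
  intro s hs
  have hθs : (0:ℝ) < θ + s := by linarith
  -- derivative computation
  have h1 : HasDerivAt (fun u : ℝ => θ + u) 1 s := (hasDerivAt_id s).const_add θ
  have h2 : HasDerivAt (fun u : ℝ => (θ + u) ^ γ) (γ * (θ + s) ^ (γ - 1) * 1) s :=
    (Real.hasDerivAt_rpow_const (Or.inl hθs.ne')).comp s h1
  have h3 : HasDerivAt (fun u : ℝ => 1 + lam * ((θ + u) ^ γ - θ ^ γ))
      (lam * (γ * (θ + s) ^ (γ - 1) * 1)) s :=
    ((h2.sub_const (θ ^ γ)).const_mul lam).const_add 1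
  set D : ℝ := 1 + lam * ((θ + s) ^ γ - θ ^ γ) with hD
  have hDpos : 0 < D := by
    have h4 : 0 < lam * (θ + s) ^ γ := by positivity
    have : D = (1 - lam * θ ^ γ) + lam * (θ + s) ^ γ := by ring
    rw [this]; linarith
  have h5 : HasDerivAt (fun u : ℝ => δ * Real.log (1 + lam * ((θ + u) ^ γ - θ ^ γ)))
      (δ * (lam * (γ * (θ + s) ^ (γ - 1) * 1) / D)) s :=
    (h3.log hDpos.ne').const_mul δ
  have hderiv : deriv (fun u : ℝ => δ * Real.log (1 + lam * ((θ + u) ^ γ - θ ^ γ))) s =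
      δ * (lam * (γ * (θ + s) ^ (γ - 1) * 1) / D) := h5.deriv
  have key : (θ + s) ^ γ = (θ + s) ^ (γ - 1) * (θ + s) := by
    rw [← Real.rpow_add_one hθs.ne' (γ - 1)]; ring_nf
  constructor
  · rw [hderiv]; field_simp
  · rw [hderiv]
    have hden : (θ + s) ^ γ - c = D / lam := by
      rw [hc, hD]; field_simp; ring
    rw [hden]
    rw [div_div_eq_mul_div, eq_comm]
    have : θ * (θ + s) ^ (γ - 1) - c = ((θ + s) ^ γ - s * (θ + s) ^ (γ - 1)) - c := by
      rw [key]; ring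
    rw [this]
    field_simp
    have key' : (θ + s) ^ γ = (θ + s) ^ (-1 + γ) * (θ + s) := by
      rw [show (-1 + γ) = γ - 1 by ring]; exact key
    rw [hc]
    field_simp
    ring
end

section
/- Let γ ∈ (0,1), λ > 0, θ > 0, δ > 0, H > 0, t > 0 and s > 0. Then δ·log( 1 + λ·((θ + t^H s)^γ − θ^γ) ) = δ·log( 1 + λ t^{Hγ}·((θ t^{−H} + s)^γ − (θ t^{−H})^γ) ). Equivalently, if φ is the TPL(γ,λ,δ,θ) characteristic exponent, then φ(t^H s) is the TPL(γ, λ t^{Hγ}, δ, θ t^{−H}) characteristic exponent evaluated at s; hence the H-self-similar additive (Sato) process generated by a TPL(γ,λ,δ,θ) law has marginal at time t distributed as TPL(γ, λ t^{Hγ}, δ, θ t^{−H}). -/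
/-- Marginals of the H-self-similar additive (Sato) process generated by a
TPL(γ,λ,δ,θ) law: the unit-time exponent evaluated at `t^H s` is the
TPL(γ, λt^{Hγ}, δ, θt^{-H}) exponent evaluated at `s`. -/
theorem tpl_sato_marginal (γ lam δ θ H t s : ℝ)
    (hγ : γ ∈ Set.Ioo (0 : ℝ) 1) (hlam : 0 < lam) (hθ : 0 < θ) (hδ : 0 < δ)
    (hH : 0 < H) (ht : 0 < t) (hs : 0 < s) :
    δ * Real.log (1 + lam * ((θ + t ^ H * s) ^ γ - θ ^ γ)) =
      δ * Real.log (1 + lam * t ^ (H * γ) *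
        ((θ * t ^ (-H) + s) ^ γ - (θ * t ^ (-H)) ^ γ)) := by
  have htH : (0:ℝ) < t ^ H := Real.rpow_pos_of_pos ht H
  have key : t ^ (H * γ) * ((θ * t ^ (-H) + s) ^ γ - (θ * t ^ (-H)) ^ γ)
      = (θ + t ^ H * s) ^ γ - θ ^ γ := by
    have h1 : t ^ (H * γ) = (t ^ H) ^ γ := Real.rpow_mul ht.le H γ
    have hx : (0:ℝ) ≤ θ * t ^ (-H) + s := by positivity
    have hy : (0:ℝ) ≤ θ * t ^ (-H) := by positivity
    have hmul : ∀ x : ℝ, 0 ≤ x → (t ^ H) ^ γ * x ^ γ = (t ^ H * x) ^ γ := fun x hx =>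
      (Real.mul_rpow htH.le hx).symm
    rw [h1, mul_sub, hmul _ hx, hmul _ hy]
    have hcancel : t ^ H * (θ * t ^ (-H)) = θ := by
      rw [mul_comm θ, ← mul_assoc, ← Real.rpow_add ht, add_neg_cancel, Real.rpow_zero, one_mul]
    rw [mul_add, hcancel, mul_comm (t ^ H) s]
  rw [mul_assoc, key]
end
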